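/- arXiv:2401.03380 — 4 statements merged into one kernel-verified Lean document; each statement's English description precedes it below -/
import Mathlib

section
/- Let p be a prime and a, b, r positive integers with p > a+b and r ≥ 1. If a+b is odd then ℋ_{p^r}(a,b) ≡ p^{r-1} ℋ_p(a,b) (mod p^r), where ℋ_{p^r}(a,b) := ∑ 1/(u1^a u2^b) over all 0 < u1 < u2 < p^r with p ∤ u1, p ∤ u2, and p ∤ (u2 - u1). -/
open Finset


/-- binomial expansion to second order, over ℤ -/
lemma pow_add_eps (z ε : ℤ) (s : ℕ) :
    ∃ A : ℤ, (z + ε) ^ (s + 1) = z ^ (s + 1) + ((s : ℤ) + 1) * z ^ s * ε + ε ^ 2 * A := by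
  induction s with
  | zero => exact ⟨0, by ring⟩
  | succ n ih =>
    obtain ⟨A, hA⟩ := ih
    refine ⟨((n : ℤ) + 1) * z ^ n + A * z + A * ε, ?_⟩
    have : (z + ε) ^ (n + 1 + 1) = (z + ε) ^ (n + 1) * (z + ε) := by ring
    rw [this, hA]; push_cast; ring

lemma expand_num (z ε : ℤ) (s : ℕ) :
    ∃ E : ℤ, z ^ (s + 2) - (z + ε) ^ (s + 1) * z + ((s : ℤ) + 1) * ε * (z + ε) ^ (s + 1)
      = ε ^ 2 * E := by
  obtain ⟨A, hA⟩ := pow_add_eps z ε s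
  refine ⟨((s : ℤ) + 1) ^ 2 * z ^ s + ((s : ℤ) + 1) * ε * A - z * A, ?_⟩
  rw [show s + 2 = (s + 1) + 1 by ring, pow_succ, hA]
  ring


section B
variable {p : ℕ} [hp : Fact p.Prime]

lemma norm_nat_le_one (u : ℕ) : ‖(u : ℚ_[p])‖ ≤ 1 := by
  have h := Padic.norm_int_le_one (p := p) (u : ℤ)
  rwa [Int.cast_natCast] at h

lemma norm_int_eq_one {j : ℤ} (hj : ¬ (p : ℤ) ∣ j) : ‖(j : ℚ_[p])‖ = 1 := by
  have h1 := Padic.norm_int_le_one (p := p) j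
  have h2 := (Padic.norm_intCast_lt_one_iff (p := p) (k := j)).not.mpr hj
  push_neg at h2
  linarith

lemma norm_nat_eq_one {u : ℕ} (hu : ¬ p ∣ u) : ‖(u : ℚ_[p])‖ = 1 := by
  have : ¬ (p : ℤ) ∣ (u : ℤ) := by exact_mod_cast hu
  have h := norm_int_eq_one (p := p) this
  rwa [Int.cast_natCast] at h

lemma nat_ne_zero_Q {u : ℕ} (hu : ¬ p ∣ u) : (u : ℚ_[p]) ≠ 0 := by
  intro h
  have := norm_nat_eq_one (p := p) hu
  rw [h, norm_zero] at this
  norm_num at this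

lemma norm_nat_dvd_le {n : ℕ} (h : p ∣ n) : ‖(n : ℚ_[p])‖ ≤ (p : ℝ)⁻¹ := by
  obtain ⟨m, rfl⟩ := h
  push_cast
  rw [norm_mul]
  calc ‖(p : ℚ_[p])‖ * ‖(m : ℚ_[p])‖ ≤ ‖(p : ℚ_[p])‖ * 1 :=
        mul_le_mul_of_nonneg_left (norm_nat_le_one m) (norm_nonneg _)
    _ = (p : ℝ)⁻¹ := by rw [mul_one, Padic.norm_p]

lemma norm_M_pow {m : ℕ} : ‖((p ^ m : ℕ) : ℚ_[p])‖ = (p : ℝ) ^ (-(m : ℤ)) := by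
  push_cast
  exact Padic.norm_p_pow m

/-- ultrametric bound for finite sums -/
lemma norm_sum_le_of {ι : Type*} (s : Finset ι) (f : ι → ℚ_[p]) {c : ℝ} (hc : 0 ≤ c)
    (h : ∀ i ∈ s, ‖f i‖ ≤ c) : ‖∑ i ∈ s, f i‖ ≤ c := by
  classical
  induction s using Finset.cons_induction with
  | empty => simpa using hc
  | cons i s his ih =>
    rw [Finset.sum_cons]
    refine le_trans (Padic.nonarchimedean _ _) (max_le (h i (Finset.mem_cons_self i s)) ?_)
    exact ih fun j hj => h j (Finset.mem_cons_of_mem hj)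

lemma norm_sub_sum_le {ι : Type*} (s : Finset ι) (f g : ι → ℚ_[p]) {c : ℝ} (hc : 0 ≤ c)
    (h : ∀ i ∈ s, ‖f i - g i‖ ≤ c) : ‖(∑ i ∈ s, f i) - ∑ i ∈ s, g i‖ ≤ c := by
  rw [← Finset.sum_sub_distrib]
  exact norm_sum_le_of _ _ hc h

lemma norm_sub_max (x y z : ℚ_[p]) : ‖x - z‖ ≤ max ‖x - y‖ ‖y - z‖ := by
  have : x - z = (x - y) + (y - z) := by ring
  rw [this]; exact Padic.nonarchimedean _ _

lemma norm_tri {x y z : ℚ_[p]} {c : ℝ} (h1 : ‖x - y‖ ≤ c) (h2 : ‖y - z‖ ≤ c) :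
    ‖x - z‖ ≤ c := le_trans (norm_sub_max x y z) (max_le h1 h2)

lemma norm_mul_congr {x1 y1 x2 y2 : ℚ_[p]} {c : ℝ}
    (h1 : ‖x1 - y1‖ ≤ c) (h2 : ‖x2 - y2‖ ≤ c) (hx2 : ‖x2‖ ≤ 1) (hy1 : ‖y1‖ ≤ 1) :
    ‖x1 * x2 - y1 * y2‖ ≤ c := by
  have : x1 * x2 - y1 * y2 = (x1 - y1) * x2 + y1 * (x2 - y2) := by ring
  rw [this]
  refine le_trans (Padic.nonarchimedean _ _) (max_le ?_ ?_)
  · rw [norm_mul]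
    calc ‖x1 - y1‖ * ‖x2‖ ≤ c * 1 :=
      mul_le_mul h1 hx2 (norm_nonneg _) (le_trans (norm_nonneg _) h1)
      _ = c := mul_one c
  · rw [norm_mul]
    calc ‖y1‖ * ‖x2 - y2‖ ≤ 1 * c :=
      mul_le_mul hy1 h2 (norm_nonneg _) zero_le_one
      _ = c := one_mul c

/-- congruence of inverse powers of p-units -/
lemma inv_pow_congr {x y : ℕ} (hx : ¬ p ∣ x) (hy : ¬ p ∣ y) (s : ℕ) {c : ℝ}
    (hxy : ‖(x : ℚ_[p]) - (y : ℚ_[p])‖ ≤ c) :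
    ‖((x : ℚ_[p]) ^ s)⁻¹ - ((y : ℚ_[p]) ^ s)⁻¹‖ ≤ c := by
  have hx0 : (x : ℚ_[p]) ≠ 0 := nat_ne_zero_Q hx
  have hy0 : (y : ℚ_[p]) ≠ 0 := nat_ne_zero_Q hy
  have hxs : (x : ℚ_[p]) ^ s ≠ 0 := pow_ne_zero _ hx0
  have hys : (y : ℚ_[p]) ^ s ≠ 0 := pow_ne_zero _ hy0
  obtain ⟨E, hE⟩ : ∃ E : ℤ, (x : ℤ) ^ s - (y : ℤ) ^ s = ((x : ℤ) - y) * E :=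
    (sub_dvd_pow_sub_pow (x : ℤ) (y : ℤ) s)
  have key : ((x : ℚ_[p]) ^ s)⁻¹ - ((y : ℚ_[p]) ^ s)⁻¹
      = ((y : ℚ_[p]) ^ s - (x : ℚ_[p]) ^ s) * (((x : ℚ_[p]) ^ s)⁻¹ * ((y : ℚ_[p]) ^ s)⁻¹) := by
    field_simp
  rw [key, norm_mul]
  have h1 : ‖(y : ℚ_[p]) ^ s - (x : ℚ_[p]) ^ s‖ ≤ c := by
    have hcast : (y : ℚ_[p]) ^ s - (x : ℚ_[p]) ^ s = ((y : ℚ_[p]) - x) * ((E : ℤ) : ℚ_[p]) := by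
      have := congrArg (fun t : ℤ => (t : ℚ_[p])) hE
      push_cast at this
      push_cast
      linear_combination (-1 : ℚ_[p]) * this
    rw [hcast, norm_mul]
    calc ‖(y : ℚ_[p]) - x‖ * ‖((E : ℤ) : ℚ_[p])‖ ≤ c * 1 := by
          refine mul_le_mul ?_ (Padic.norm_int_le_one _) (norm_nonneg _) ?_
          · rw [← norm_neg]; simpa [neg_sub] using hxy
          · exact le_trans (norm_nonneg ((x : ℚ_[p]) - (y : ℚ_[p]))) hxy
      _ = c := mul_one c
  have h2 : ‖((x : ℚ_[p]) ^ s)⁻¹ * ((y : ℚ_[p]) ^ s)⁻¹‖ = 1 := by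
    rw [norm_mul, norm_inv, norm_inv, norm_pow, norm_pow,
      norm_nat_eq_one hx, norm_nat_eq_one hy]
    simp
  rw [h2, mul_one]
  exact h1

lemma norm_iv_eq_one {u : ℕ} (hu : ¬ p ∣ u) (s : ℕ) : ‖((u : ℚ_[p]) ^ s)⁻¹‖ = 1 := by
  rw [norm_inv, norm_pow, norm_nat_eq_one hu]; simp

end B



lemma sum_if_range' {β : Type*} [AddCommMonoid β] {m n : ℕ} (h : m ≤ n) (f : ℕ → β) :
    ∑ k ∈ Finset.range n, (if k < m then f k else 0) = ∑ k ∈ Finset.range m, f k := by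
  rw [← Finset.sum_filter]
  congr 1
  ext x
  simp only [Finset.mem_filter, Finset.mem_range]
  omega

/-- the set of pairs 0 ≤ k1 < k2 < p -/
def KS (p : ℕ) : Finset (ℕ × ℕ) :=
  (Finset.range p ×ˢ Finset.range p).filter fun k => k.1 < k.2

section C
variable {p : ℕ} [hp : Fact p.Prime]

lemma exists_nonroot (s : ℕ) (hs : ¬ (p - 1) ∣ s) :
    ∃ c : ℕ, ¬ p ∣ c ∧ ((c : ZMod p)) ^ s ≠ 1 := by
  haveI : NeZero p := ⟨hp.out.ne_zero⟩
  obtain ⟨g, hg⟩ := IsCyclic.exists_generator (α := (ZMod p)ˣ)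
  have hord : orderOf g = p - 1 := by
    rw [orderOf_eq_card_of_forall_mem_zpowers hg, Nat.card_eq_fintype_card,
      ZMod.card_units_eq_totient, Nat.totient_prime hp.out]
  have hval : (((g : ZMod p).val : ℕ) : ZMod p) = (g : ZMod p) :=
    ZMod.natCast_rightInverse (g : ZMod p)
  refine ⟨(g : ZMod p).val, ?_, ?_⟩
  · intro hdvd
    have h0 : (((g : ZMod p).val : ℕ) : ZMod p) = 0 :=
      (ZMod.natCast_eq_zero_iff _ _).mpr hdvd
    rw [hval] at h0
    exact g.ne_zero h0
  · rw [hval]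
    intro h1
    have : g ^ s = 1 := by
      ext
      push_cast
      exact h1
    exact hs (hord ▸ orderOf_dvd_of_pow_eq_one this)

lemma zmod_sum_pow_eq_zero (s : ℕ) (hs : ¬ (p - 1) ∣ s) :
    ∑ x : ZMod p, x ^ s = 0 := by
  obtain ⟨c, hc, hcs⟩ := exists_nonroot s hs
  have hc0 : ((c : ZMod p)) ≠ 0 := by
    intro h
    exact hc ((ZMod.natCast_eq_zero_iff _ _).mp h)
  have h1 : ∑ x : ZMod p, ((c : ZMod p) * x) ^ s = ∑ x : ZMod p, x ^ s :=
    Equiv.sum_comp (Equiv.mulLeft₀ (c : ZMod p) hc0) (fun y => y ^ s)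
  have h2 : ∑ x : ZMod p, ((c : ZMod p) * x) ^ s
      = (c : ZMod p) ^ s * ∑ x : ZMod p, x ^ s := by
    rw [Finset.mul_sum]
    exact Finset.sum_congr rfl fun x _ => mul_pow _ _ _
  have h3 : ((c : ZMod p) ^ s - 1) * ∑ x : ZMod p, x ^ s = 0 := by
    rw [sub_mul, one_mul, ← h2, h1, sub_self]
  rcases mul_eq_zero.mp h3 with h | h
  · exact absurd (by linear_combination h) hcs
  · exact h

lemma sum_range_zmod {M : Type*} [AddCommMonoid M] (f : ZMod p → M) :
    ∑ k ∈ Finset.range p, f (k : ZMod p) = ∑ x : ZMod p, f x := by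
  haveI : NeZero p := ⟨hp.out.ne_zero⟩
  refine Finset.sum_nbij' (fun k => (k : ZMod p)) (fun x => x.val) ?_ ?_ ?_ ?_ ?_
  · intro a _; exact Finset.mem_univ _
  · intro x _; exact Finset.mem_range.mpr (ZMod.val_lt x)
  · intro a ha; exact ZMod.val_cast_of_lt (Finset.mem_range.mp ha)
  · intro x _; exact ZMod.natCast_rightInverse x
  · intro a _; rfl

lemma KS_sum {M : Type*} [AddCommMonoid M] (F : ℕ → ℕ → M) :
    ∑ kk ∈ KS p, F kk.1 kk.2 = ∑ k2 ∈ Finset.range p, ∑ k1 ∈ Finset.range k2, F k1 k2 := by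
  rw [KS, Finset.sum_filter, Finset.sum_product, Finset.sum_comm]
  refine Finset.sum_congr rfl fun k2 hk2 => ?_
  exact sum_if_range' (le_of_lt (Finset.mem_range.mp hk2)) (fun k1 => F k1 k2)

lemma cast_sq_pred (k : ℕ) : ((k * (k - 1) : ℕ) : ZMod p) = (k : ZMod p) ^ 2 - (k : ZMod p) := by
  cases k with
  | zero => simp
  | succ n =>
    have h : n + 1 - 1 = n := rfl
    rw [h]
    push_cast
    ring

lemma two_ne_zero_zmod (hp2 : p ≠ 2) : (2 : ZMod p) ≠ 0 := by
  intro h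
  have : ((2 : ℕ) : ZMod p) = 0 := by exact_mod_cast h
  have h3 := (ZMod.natCast_eq_zero_iff 2 p).mp this
  exact hp2 ((Nat.prime_dvd_prime_iff_eq hp.out Nat.prime_two).mp h3)

lemma nd1 (hp3 : 3 ≤ p) : p ∣ ∑ k ∈ Finset.range p, k := by
  rw [← ZMod.natCast_eq_zero_iff, Nat.cast_sum]
  have h1 : ∑ k ∈ Finset.range p, ((k : ℕ) : ZMod p) = ∑ x : ZMod p, x ^ 1 := by
    rw [sum_range_zmod (fun x => x)]
    simp
  rw [h1, zmod_sum_pow_eq_zero 1 (by intro h; have := Nat.dvd_one.mp h; omega)]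

lemma not_dvd_two (hp5 : 5 ≤ p) : ¬ (p - 1) ∣ 2 := by
  intro h
  have := Nat.le_of_dvd (by norm_num) h
  omega

lemma sum_sq_zero (hp5 : 5 ≤ p) : ∑ k2 ∈ Finset.range p, ((k2 : ZMod p)) ^ 2 = 0 := by
  rw [sum_range_zmod (fun x : ZMod p => x ^ 2)]
  exact zmod_sum_pow_eq_zero 2 (not_dvd_two hp5)

lemma sum_id_zero (hp3 : 3 ≤ p) : ∑ k2 ∈ Finset.range p, ((k2 : ZMod p)) = 0 := by
  have h1 : ∑ k2 ∈ Finset.range p, ((k2 : ZMod p)) = ∑ x : ZMod p, x ^ 1 := by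
    rw [sum_range_zmod (fun x : ZMod p => x)]
    simp
  rw [h1, zmod_sum_pow_eq_zero 1 (by intro h; have := Nat.dvd_one.mp h; omega)]

lemma ndcard (hp5 : 5 ≤ p) : p ∣ (KS p).card := by
  rw [← ZMod.natCast_eq_zero_iff]
  have h0 : ((KS p).card : ZMod p) = ∑ kk ∈ KS p, (1 : ZMod p) := by simp
  rw [h0, KS_sum (fun _ _ => (1 : ZMod p))]
  have e1 : ∀ k2 ∈ Finset.range p, ∑ _k1 ∈ Finset.range k2, (1 : ZMod p) = (k2 : ZMod p) := by
    intro k2 _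
    rw [Finset.sum_const, Finset.card_range, nsmul_eq_mul, mul_one]
  rw [Finset.sum_congr rfl e1]
  exact sum_id_zero (by omega)

lemma nd3 (hp5 : 5 ≤ p) : p ∣ ∑ kk ∈ KS p, kk.1 := by
  rw [← ZMod.natCast_eq_zero_iff, Nat.cast_sum]
  have h1 : ∑ kk ∈ KS p, ((kk.1 : ℕ) : ZMod p)
      = ∑ k2 ∈ Finset.range p, ∑ k1 ∈ Finset.range k2, (k1 : ZMod p) :=
    KS_sum (fun k1 _ => ((k1 : ℕ) : ZMod p))
  have h2 : ∀ k2 : ℕ, (2 : ZMod p) * ∑ k1 ∈ Finset.range k2, ((k1 : ℕ) : ZMod p)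
      = (k2 : ZMod p) ^ 2 - (k2 : ZMod p) := by
    intro k2
    have hg := Finset.sum_range_id_mul_two k2
    have hl : ((∑ i ∈ Finset.range k2, i : ℕ) : ZMod p)
        = ∑ i ∈ Finset.range k2, ((i : ℕ) : ZMod p) := Nat.cast_sum _ _
    calc (2 : ZMod p) * ∑ k1 ∈ Finset.range k2, ((k1 : ℕ) : ZMod p)
        = (((∑ i ∈ Finset.range k2, i) * 2 : ℕ) : ZMod p) := by rw [Nat.cast_mul, hl]; push_cast; ring
      _ = ((k2 * (k2 - 1) : ℕ) : ZMod p) := by rw [hg]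
      _ = (k2 : ZMod p) ^ 2 - (k2 : ZMod p) := cast_sq_pred k2
  have h3 : (2 : ZMod p) * ∑ kk ∈ KS p, ((kk.1 : ℕ) : ZMod p) = 0 := by
    rw [h1, Finset.mul_sum]
    have e1 : ∑ k2 ∈ Finset.range p, (2 : ZMod p) * ∑ k1 ∈ Finset.range k2, ((k1 : ℕ) : ZMod p)
        = ∑ k2 ∈ Finset.range p, ((k2 : ZMod p) ^ 2 - (k2 : ZMod p)) :=
      Finset.sum_congr rfl fun k2 _ => h2 k2
    rw [e1, Finset.sum_sub_distrib, sum_sq_zero hp5, sum_id_zero (by omega), sub_zero]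
  rcases mul_eq_zero.mp h3 with h | h
  · exact absurd h (two_ne_zero_zmod (by omega))
  · exact h

lemma nd4 (hp5 : 5 ≤ p) : p ∣ ∑ kk ∈ KS p, kk.2 := by
  rw [← ZMod.natCast_eq_zero_iff, Nat.cast_sum]
  have h1 : ∑ kk ∈ KS p, ((kk.2 : ℕ) : ZMod p)
      = ∑ k2 ∈ Finset.range p, ∑ k1 ∈ Finset.range k2, (k2 : ZMod p) :=
    KS_sum (fun _ k2 => ((k2 : ℕ) : ZMod p))
  have e1 : ∀ k2 ∈ Finset.range p, ∑ _k1 ∈ Finset.range k2, ((k2 : ℕ) : ZMod p)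
      = (k2 : ZMod p) ^ 2 := by
    intro k2 _
    rw [Finset.sum_const, Finset.card_range, nsmul_eq_mul]
    ring
  rw [h1, Finset.sum_congr rfl e1]
  exact sum_sq_zero hp5

end C



lemma digit_lt_iff' {M z1 z2 k1 k2 : ℕ} (h1 : z1 < M) (h2 : z2 < M) :
    z1 + k1 * M < z2 + k2 * M ↔ k1 < k2 ∨ (k1 = k2 ∧ z1 < z2) := by
  constructor
  · intro h
    rcases lt_trichotomy k1 k2 with hk | hk | hk
    · exact Or.inl hk
    · subst hk; exact Or.inr ⟨rfl, by omega⟩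
    · exfalso
      have h3 : (k2 + 1) * M ≤ k1 * M := Nat.mul_le_mul_right M hk
      have h4 : (k2 + 1) * M = k2 * M + M := by ring
      omega
  · rintro (hk | ⟨rfl, hz⟩)
    · have h3 : (k1 + 1) * M ≤ k2 * M := Nat.mul_le_mul_right M hk
      have h4 : (k1 + 1) * M = k1 * M + M := by ring
      omega
    · omega

def HSet (p N : ℕ) : Finset (ℕ × ℕ) :=
  (Finset.range N ×ˢ Finset.range N).filter
    (fun u : ℕ × ℕ => 0 < u.1 ∧ u.1 < u.2 ∧ ¬ p ∣ u.1 ∧ ¬ p ∣ u.2 ∧ ¬ p ∣ (u.2 - u.1))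

def OSet (p M : ℕ) : Finset (ℕ × ℕ) :=
  (Finset.range M ×ˢ Finset.range M).filter
    (fun z : ℕ × ℕ => ¬ p ∣ z.1 ∧ ¬ p ∣ z.2 ∧ ((z.1 : ZMod p) ≠ (z.2 : ZMod p)))

def KS' (p : ℕ) : Finset (ℕ × ℕ) :=
  (Finset.range p ×ˢ Finset.range p).filter fun k => k.1 < k.2

lemma mem_HSet {p N : ℕ} {u : ℕ × ℕ} : u ∈ HSet p N ↔
    u.1 < N ∧ u.2 < N ∧ 0 < u.1 ∧ u.1 < u.2 ∧ ¬ p ∣ u.1 ∧ ¬ p ∣ u.2 ∧ ¬ p ∣ (u.2 - u.1) := by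
  simp only [HSet, Finset.mem_filter, Finset.mem_product, Finset.mem_range]
  tauto

lemma mem_OSet {p M : ℕ} {z : ℕ × ℕ} : z ∈ OSet p M ↔
    z.1 < M ∧ z.2 < M ∧ ¬ p ∣ z.1 ∧ ¬ p ∣ z.2 ∧ ((z.1 : ZMod p) ≠ (z.2 : ZMod p)) := by
  simp only [OSet, Finset.mem_filter, Finset.mem_product, Finset.mem_range]
  tauto

lemma mem_KS' {p : ℕ} {k : ℕ × ℕ} : k ∈ KS' p ↔ k.1 < p ∧ k.2 < p ∧ k.1 < k.2 := by
  simp only [KS', Finset.mem_filter, Finset.mem_product, Finset.mem_range]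
  tauto

section D
variable {p : ℕ} [hp : Fact p.Prime]

lemma cast_mod_M {M : ℕ} (hM : p ∣ M) (u : ℕ) : ((u % M : ℕ) : ZMod p) = (u : ZMod p) := by
  calc ((u % M : ℕ) : ZMod p) = ((u % M % p : ℕ) : ZMod p) := (ZMod.natCast_mod _ p).symm
    _ = ((u % p : ℕ) : ZMod p) := by rw [Nat.mod_mod_of_dvd u hM]
    _ = (u : ZMod p) := ZMod.natCast_mod u p

lemma dvd_sub_iff' {u1 u2 : ℕ} (h : u1 ≤ u2) :
    p ∣ (u2 - u1) ↔ ((u1 : ZMod p) = (u2 : ZMod p)) := by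
  rw [← ZMod.natCast_eq_zero_iff, Nat.cast_sub h, sub_eq_zero]
  exact ⟨fun h' => h'.symm, fun h' => h'.symm⟩

lemma not_dvd_digit {M z k : ℕ} (hM : p ∣ M) (hz : ¬ p ∣ z) : ¬ p ∣ (z + k * M) := by
  intro hdvd
  have h1 : p ∣ k * M := Dvd.dvd.mul_left hM k
  have h2 : z + k * M - k * M = z := by omega
  exact hz (h2 ▸ Nat.dvd_sub hdvd h1)

lemma cast_digit_zmod {M z k : ℕ} (hM : p ∣ M) :
    ((z + k * M : ℕ) : ZMod p) = (z : ZMod p) := by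
  have hM0 : ((M : ℕ) : ZMod p) = 0 := (ZMod.natCast_eq_zero_iff M p).mpr hM
  push_cast [hM0]
  ring

lemma digit_div {M z k : ℕ} (hz : z < M) (hM0 : 0 < M) : (z + k * M) / M = k := by
  rw [mul_comm, Nat.add_mul_div_left z k hM0, Nat.div_eq_of_lt hz, zero_add]

lemma digit_mod {M z k : ℕ} (hz : z < M) : (z + k * M) % M = z := by
  rw [mul_comm, Nat.add_mul_mod_self_left, Nat.mod_eq_of_lt hz]

lemma digit_lt_pM {M z k : ℕ} (hz : z < M) (hk : k < p) : z + k * M < p * M := by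
  have h3 : (k + 1) * M ≤ p * M := Nat.mul_le_mul_right M hk
  have h4 : (k + 1) * M = k * M + M := by ring
  omega

lemma key_split (M : ℕ) (hM : p ∣ M) (hM0 : 0 < M) (F : ℕ → ℕ → ℚ_[p]) :
    ∑ u ∈ HSet p (p * M), F u.1 u.2
      = (∑ k ∈ Finset.range p, ∑ z ∈ HSet p M, F (z.1 + k * M) (z.2 + k * M))
        + ∑ q ∈ KS' p ×ˢ OSet p M, F (q.2.1 + q.1.1 * M) (q.2.2 + q.1.2 * M) := by
  classical
  rw [← Finset.sum_filter_add_sum_filter_not (HSet p (p * M))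
    (fun u => u.1 / M = u.2 / M) (fun u => F u.1 u.2)]
  congr 1
  · -- diagonal part
    rw [← Finset.sum_product (s := Finset.range p) (t := HSet p M)
      (f := fun q => F (q.2.1 + q.1 * M) (q.2.2 + q.1 * M))]
    refine Finset.sum_nbij' (fun u => (u.1 / M, (u.1 % M, u.2 % M)))
      (fun q => (q.2.1 + q.1 * M, q.2.2 + q.1 * M)) ?_ ?_ ?_ ?_ ?_
    · rintro ⟨u1, u2⟩ hu
      rw [Finset.mem_filter, mem_HSet] at hu
      obtain ⟨⟨h1N, h2N, h10, h12, hd1, hd2, hd12⟩, hq⟩ := hu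
      dsimp only at hq ⊢
      have e1 : u1 % M + u1 / M * M = u1 := Nat.mod_add_div' u1 M
      have e2 : u2 % M + u2 / M * M = u2 := Nat.mod_add_div' u2 M
      rw [← hq] at e2
      rw [Finset.mem_product, Finset.mem_range, mem_HSet]
      dsimp only
      refine ⟨(Nat.div_lt_iff_lt_mul hM0).mpr h1N, Nat.mod_lt u1 hM0, Nat.mod_lt u2 hM0,
        ?_, by omega, fun h => hd1 ((Nat.dvd_mod_iff hM).mp h),
        fun h => hd2 ((Nat.dvd_mod_iff hM).mp h), ?_⟩
      · exact Nat.pos_of_ne_zero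
          (fun h0 => hd1 (dvd_trans hM (Nat.dvd_of_mod_eq_zero h0)))
      · intro h
        apply hd12
        have h2 : u2 - u1 = u2 % M - u1 % M := by omega
        rw [h2]
        exact h
    · rintro ⟨k, z1, z2⟩ hq
      rw [Finset.mem_product, Finset.mem_range, mem_HSet] at hq
      dsimp only at hq
      obtain ⟨hk, h1M, h2M, h10, h12, hd1, hd2, hd12⟩ := hq
      rw [Finset.mem_filter, mem_HSet]
      dsimp only
      refine ⟨⟨digit_lt_pM h1M hk, digit_lt_pM h2M hk, by omega, by omega,
        not_dvd_digit hM hd1, not_dvd_digit hM hd2, ?_⟩, ?_⟩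
      · have h2 : z2 + k * M - (z1 + k * M) = z2 - z1 := by omega
        rw [h2]
        exact hd12
      · rw [digit_div h1M hM0, digit_div h2M hM0]
    · rintro ⟨u1, u2⟩ hu
      rw [Finset.mem_filter] at hu
      obtain ⟨_, hq⟩ := hu
      dsimp only at hq ⊢
      have e1 : u1 % M + u1 / M * M = u1 := Nat.mod_add_div' u1 M
      have e2 : u2 % M + u2 / M * M = u2 := Nat.mod_add_div' u2 M
      rw [← hq] at e2
      exact Prod.ext e1 e2
    · rintro ⟨k, z1, z2⟩ hq
      rw [Finset.mem_product, Finset.mem_range, mem_HSet] at hq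
      dsimp only at hq
      obtain ⟨hk, h1M, h2M, _⟩ := hq
      dsimp only
      rw [digit_div h1M hM0, digit_mod h1M, digit_mod h2M]
    · rintro ⟨u1, u2⟩ hu
      rw [Finset.mem_filter] at hu
      obtain ⟨_, hq⟩ := hu
      dsimp only at hq ⊢
      have e1 : u1 % M + u1 / M * M = u1 := Nat.mod_add_div' u1 M
      have e2 : u2 % M + u2 / M * M = u2 := Nat.mod_add_div' u2 M
      rw [← hq] at e2
      rw [e1, e2]
  · -- off-diagonal part
    refine Finset.sum_nbij' (fun u => ((u.1 / M, u.2 / M), (u.1 % M, u.2 % M)))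
      (fun q => (q.2.1 + q.1.1 * M, q.2.2 + q.1.2 * M)) ?_ ?_ ?_ ?_ ?_
    · rintro ⟨u1, u2⟩ hu
      rw [Finset.mem_filter, mem_HSet] at hu
      obtain ⟨⟨h1N, h2N, h10, h12, hd1, hd2, hd12⟩, hq⟩ := hu
      dsimp only at hq ⊢
      rw [Finset.mem_product, mem_KS', mem_OSet]
      dsimp only
      refine ⟨⟨(Nat.div_lt_iff_lt_mul hM0).mpr h1N, (Nat.div_lt_iff_lt_mul hM0).mpr h2N, ?_⟩,
        Nat.mod_lt u1 hM0, Nat.mod_lt u2 hM0,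
        fun h => hd1 ((Nat.dvd_mod_iff hM).mp h),
        fun h => hd2 ((Nat.dvd_mod_iff hM).mp h), ?_⟩
      · exact lt_of_le_of_ne (Nat.div_le_div_right (le_of_lt h12)) hq
      · rw [cast_mod_M hM, cast_mod_M hM]
        intro h
        exact hd12 ((dvd_sub_iff' (le_of_lt h12)).mpr h)
    · rintro ⟨⟨k1, k2⟩, z1, z2⟩ hq
      rw [Finset.mem_product, mem_KS', mem_OSet] at hq
      dsimp only at hq
      obtain ⟨⟨hk1, hk2, hkk⟩, h1M, h2M, hd1, hd2, hne⟩ := hq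
      have h12 : z1 + k1 * M < z2 + k2 * M := (digit_lt_iff' h1M h2M).mpr (Or.inl hkk)
      have h10 : z1 ≠ 0 := fun h => hd1 (h ▸ dvd_zero p)
      rw [Finset.mem_filter, mem_HSet]
      dsimp only
      refine ⟨⟨digit_lt_pM h1M hk1, digit_lt_pM h2M hk2, by omega, h12,
        not_dvd_digit hM hd1, not_dvd_digit hM hd2, ?_⟩, ?_⟩
      · intro h
        apply hne
        have h2 := (dvd_sub_iff' (le_of_lt h12)).mp h
        rwa [cast_digit_zmod hM, cast_digit_zmod hM] at h2
      · rw [digit_div h1M hM0, digit_div h2M hM0]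
        omega
    · rintro ⟨u1, u2⟩ _
      dsimp only
      exact Prod.ext (Nat.mod_add_div' u1 M) (Nat.mod_add_div' u2 M)
    · rintro ⟨⟨k1, k2⟩, z1, z2⟩ hq
      rw [Finset.mem_product, mem_KS', mem_OSet] at hq
      dsimp only at hq
      obtain ⟨⟨hk1, hk2, hkk⟩, h1M, h2M, _⟩ := hq
      dsimp only
      rw [digit_div h1M hM0, digit_div h2M hM0, digit_mod h1M, digit_mod h2M]
    · rintro ⟨u1, u2⟩ _
      dsimp only
      rw [Nat.mod_add_div' u1 M, Nat.mod_add_div' u2 M]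
end D


section E
variable {p : ℕ} [hp : Fact p.Prime]

lemma norm_natCast_le_M {M n : ℕ} (h : M ∣ n) : ‖(n : ℚ_[p])‖ ≤ ‖(M : ℚ_[p])‖ := by
  obtain ⟨t, rfl⟩ := h
  push_cast
  rw [norm_mul]
  calc ‖(M : ℚ_[p])‖ * ‖(t : ℚ_[p])‖ ≤ ‖(M : ℚ_[p])‖ * 1 :=
        mul_le_mul_of_nonneg_left (norm_nat_le_one t) (norm_nonneg _)
    _ = ‖(M : ℚ_[p])‖ := mul_one _

lemma mod_close (M u : ℕ) : ‖((u % M : ℕ) : ℚ_[p]) - (u : ℚ_[p])‖ ≤ ‖(M : ℚ_[p])‖ := by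
  have e : u % M + M * (u / M) = u := Nat.mod_add_div u M
  have h : ((u % M : ℕ) : ℚ_[p]) - (u : ℚ_[p]) = -((M : ℚ_[p]) * ((u / M : ℕ) : ℚ_[p])) := by
    have := congrArg (fun t : ℕ => (t : ℚ_[p])) e
    push_cast at this
    linear_combination this
  rw [h, norm_neg, norm_mul]
  calc ‖(M : ℚ_[p])‖ * ‖((u / M : ℕ) : ℚ_[p])‖ ≤ ‖(M : ℚ_[p])‖ * 1 :=
        mul_le_mul_of_nonneg_left (norm_nat_le_one _) (norm_nonneg _)
    _ = ‖(M : ℚ_[p])‖ := mul_one _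

lemma field_expand {K : Type*} [Field K] (Z W e c R : K) (s : ℕ) (hZ : Z ≠ 0) (hW : W ≠ 0)
    (hkey : Z ^ (s + 2) - W ^ (s + 1) * Z + c * e * W ^ (s + 1) = e ^ 2 * R) :
    (W ^ (s + 1))⁻¹ - ((Z ^ (s + 1))⁻¹ - c * e * (Z ^ (s + 2))⁻¹)
      = e ^ 2 * R / (W ^ (s + 1) * Z ^ (s + 2)) := by
  have hZ2 : Z ^ (s + 2) ≠ 0 := pow_ne_zero _ hZ
  have hZ1 : Z ^ (s + 1) ≠ 0 := pow_ne_zero _ hZ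
  have hW1 : W ^ (s + 1) ≠ 0 := pow_ne_zero _ hW
  rw [← hkey]
  field_simp
  ring

/-- first-order p-adic expansion of `1/(z+kM)^(s+1)` -/
lemma inv_digit_expand {M z k s : ℕ} (hM : p ∣ M) (hz : ¬ p ∣ z) :
    ‖(((z + k * M : ℕ) : ℚ_[p]) ^ (s + 1))⁻¹
      - (((z : ℚ_[p]) ^ (s + 1))⁻¹
          - ((s : ℚ_[p]) + 1) * (k : ℚ_[p]) * (M : ℚ_[p]) * ((z : ℚ_[p]) ^ (s + 2))⁻¹)‖
      ≤ ‖(M : ℚ_[p])‖ ^ 2 := by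
  have hw : ¬ p ∣ (z + k * M) := not_dvd_digit hM hz
  have hz0 : (z : ℚ_[p]) ≠ 0 := nat_ne_zero_Q hz
  have hw0 : ((z + k * M : ℕ) : ℚ_[p]) ≠ 0 := nat_ne_zero_Q hw
  obtain ⟨E, hE⟩ := expand_num (z : ℤ) ((k * M : ℕ) : ℤ) s
  have hWe : ((z + k * M : ℕ) : ℚ_[p]) = (z : ℚ_[p]) + (k : ℚ_[p]) * (M : ℚ_[p]) := by
    push_cast; ring
  have h2 := congrArg (fun t : ℤ => (t : ℚ_[p])) hE
  push_cast at h2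
  have hcast : (z : ℚ_[p]) ^ (s + 2) - ((z + k * M : ℕ) : ℚ_[p]) ^ (s + 1) * (z : ℚ_[p])
      + ((s : ℚ_[p]) + 1) * ((k : ℚ_[p]) * (M : ℚ_[p])) * ((z + k * M : ℕ) : ℚ_[p]) ^ (s + 1)
      = ((k : ℚ_[p]) * (M : ℚ_[p])) ^ 2 * (E : ℚ_[p]) := by
    rw [hWe]
    linear_combination h2
  have main := field_expand (z : ℚ_[p]) ((z + k * M : ℕ) : ℚ_[p])
    ((k : ℚ_[p]) * (M : ℚ_[p])) ((s : ℚ_[p]) + 1) (E : ℚ_[p]) s hz0 hw0 hcast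
  have hassoc : ((s : ℚ_[p]) + 1) * (k : ℚ_[p]) * (M : ℚ_[p]) * ((z : ℚ_[p]) ^ (s + 2))⁻¹
      = ((s : ℚ_[p]) + 1) * ((k : ℚ_[p]) * (M : ℚ_[p])) * ((z : ℚ_[p]) ^ (s + 2))⁻¹ := by
    ring
  rw [hassoc, main, norm_div, norm_mul, norm_pow, norm_mul, norm_mul, norm_pow, norm_pow,
    norm_nat_eq_one hw, norm_nat_eq_one hz]
  simp only [one_pow, mul_one, one_mul, div_one]
  calc (‖(k : ℚ_[p])‖ * ‖(M : ℚ_[p])‖) ^ 2 * ‖((E : ℤ) : ℚ_[p])‖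
      ≤ (1 * ‖(M : ℚ_[p])‖) ^ 2 * 1 := by
        refine mul_le_mul ?_ (Padic.norm_int_le_one _) (norm_nonneg _) (by positivity)
        refine pow_le_pow_left₀ (by positivity) ?_ 2
        exact mul_le_mul_of_nonneg_right (norm_nat_le_one k) (norm_nonneg _)
    _ = ‖(M : ℚ_[p])‖ ^ 2 := by ring

lemma norm_le_one_sub {x y : ℚ_[p]} (hx : ‖x‖ ≤ 1) (hy : ‖y‖ ≤ 1) : ‖x - y‖ ≤ 1 := by
  have h : x - y = x + (-y) := by ring
  rw [h]
  refine le_trans (Padic.nonarchimedean _ _) (max_le hx ?_)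
  rwa [norm_neg]

lemma norm_nat_cast_succ (s : ℕ) : ‖((s : ℚ_[p]) + 1)‖ ≤ 1 := by
  have h : ((s : ℚ_[p]) + 1) = ((s + 1 : ℕ) : ℚ_[p]) := by push_cast; ring
  rw [h]
  exact norm_nat_le_one _

/-- expansion of a product term -/
lemma pair_expand {M z1 z2 k1 k2 a' b' : ℕ} (hM : p ∣ M) (h1 : ¬ p ∣ z1) (h2 : ¬ p ∣ z2) :
    ‖(((z1 + k1 * M : ℕ) : ℚ_[p]) ^ (a' + 1))⁻¹ * (((z2 + k2 * M : ℕ) : ℚ_[p]) ^ (b' + 1))⁻¹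
      - (((z1 : ℚ_[p]) ^ (a' + 1))⁻¹ * ((z2 : ℚ_[p]) ^ (b' + 1))⁻¹
          - (M : ℚ_[p]) * (((a' : ℚ_[p]) + 1) * (k1 : ℚ_[p])
                * (((z1 : ℚ_[p]) ^ (a' + 2))⁻¹ * ((z2 : ℚ_[p]) ^ (b' + 1))⁻¹)
              + ((b' : ℚ_[p]) + 1) * (k2 : ℚ_[p])
                * (((z1 : ℚ_[p]) ^ (a' + 1))⁻¹ * ((z2 : ℚ_[p]) ^ (b' + 2))⁻¹)))‖
      ≤ ‖(M : ℚ_[p])‖ ^ 2 := by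
  have hw1 : ¬ p ∣ (z1 + k1 * M) := not_dvd_digit hM h1
  have hw2 : ¬ p ∣ (z2 + k2 * M) := not_dvd_digit hM h2
  set X1 : ℚ_[p] := (((z1 + k1 * M : ℕ) : ℚ_[p]) ^ (a' + 1))⁻¹ with hX1
  set X2 : ℚ_[p] := (((z2 + k2 * M : ℕ) : ℚ_[p]) ^ (b' + 1))⁻¹ with hX2
  set A1 : ℚ_[p] := ((z1 : ℚ_[p]) ^ (a' + 1))⁻¹ with hA1
  set A2 : ℚ_[p] := ((z2 : ℚ_[p]) ^ (b' + 1))⁻¹ with hA2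
  set B1 : ℚ_[p] := ((z1 : ℚ_[p]) ^ (a' + 2))⁻¹ with hB1
  set B2 : ℚ_[p] := ((z2 : ℚ_[p]) ^ (b' + 2))⁻¹ with hB2
  set c1 : ℚ_[p] := ((a' : ℚ_[p]) + 1) * (k1 : ℚ_[p]) * (M : ℚ_[p]) * B1 with hc1
  set c2 : ℚ_[p] := ((b' : ℚ_[p]) + 1) * (k2 : ℚ_[p]) * (M : ℚ_[p]) * B2 with hc2
  have he1 : ‖X1 - (A1 - c1)‖ ≤ ‖(M : ℚ_[p])‖ ^ 2 := inv_digit_expand hM h1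
  have he2 : ‖X2 - (A2 - c2)‖ ≤ ‖(M : ℚ_[p])‖ ^ 2 := inv_digit_expand hM h2
  have hnX2 : ‖X2‖ ≤ 1 := le_of_eq (norm_iv_eq_one hw2 _)
  have hnA1 : ‖A1‖ ≤ 1 := le_of_eq (norm_iv_eq_one h1 _)
  have hnA2 : ‖A2‖ ≤ 1 := le_of_eq (norm_iv_eq_one h2 _)
  have hnB1 : ‖B1‖ ≤ 1 := le_of_eq (norm_iv_eq_one h1 _)
  have hnB2 : ‖B2‖ ≤ 1 := le_of_eq (norm_iv_eq_one h2 _)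
  have hnc1 : ‖c1‖ ≤ 1 := by
    rw [hc1, norm_mul, norm_mul, norm_mul]
    have := mul_le_mul (mul_le_mul (mul_le_mul (norm_nat_cast_succ (p := p) a')
      (norm_nat_le_one (p := p) k1) (norm_nonneg _) zero_le_one)
      (norm_nat_le_one (p := p) M) (norm_nonneg _) (by positivity))
      hnB1 (norm_nonneg _) (by positivity)
    simpa using this
  have hnc2 : ‖c2‖ ≤ 1 := by
    rw [hc2, norm_mul, norm_mul, norm_mul]
    have := mul_le_mul (mul_le_mul (mul_le_mul (norm_nat_cast_succ (p := p) b')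
      (norm_nat_le_one (p := p) k2) (norm_nonneg _) zero_le_one)
      (norm_nat_le_one (p := p) M) (norm_nonneg _) (by positivity))
      hnB2 (norm_nonneg _) (by positivity)
    simpa using this
  have hnY1 : ‖A1 - c1‖ ≤ 1 := norm_le_one_sub hnA1 hnc1
  have step1 : ‖X1 * X2 - (A1 - c1) * (A2 - c2)‖ ≤ ‖(M : ℚ_[p])‖ ^ 2 :=
    norm_mul_congr he1 he2 hnX2 hnY1
  have step2 : ‖(A1 - c1) * (A2 - c2)
      - (A1 * A2 - (M : ℚ_[p]) * (((a' : ℚ_[p]) + 1) * (k1 : ℚ_[p]) * (B1 * A2)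
          + ((b' : ℚ_[p]) + 1) * (k2 : ℚ_[p]) * (A1 * B2)))‖ ≤ ‖(M : ℚ_[p])‖ ^ 2 := by
    have hid : (A1 - c1) * (A2 - c2)
        - (A1 * A2 - (M : ℚ_[p]) * (((a' : ℚ_[p]) + 1) * (k1 : ℚ_[p]) * (B1 * A2)
            + ((b' : ℚ_[p]) + 1) * (k2 : ℚ_[p]) * (A1 * B2))) = c1 * c2 := by
      rw [hc1, hc2]; ring
    rw [hid, hc1, hc2]
    have hr : ((a' : ℚ_[p]) + 1) * (k1 : ℚ_[p]) * (M : ℚ_[p]) * B1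
        * (((b' : ℚ_[p]) + 1) * (k2 : ℚ_[p]) * (M : ℚ_[p]) * B2)
        = (M : ℚ_[p]) ^ 2 * (((a' : ℚ_[p]) + 1) * (k1 : ℚ_[p]) * B1
            * (((b' : ℚ_[p]) + 1) * (k2 : ℚ_[p]) * B2)) := by ring
    rw [hr, norm_mul, norm_pow]
    have hrest : ‖((a' : ℚ_[p]) + 1) * (k1 : ℚ_[p]) * B1
        * (((b' : ℚ_[p]) + 1) * (k2 : ℚ_[p]) * B2)‖ ≤ 1 := by
      rw [norm_mul, norm_mul, norm_mul, norm_mul, norm_mul]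
      have ha : ‖((a' : ℚ_[p]) + 1)‖ * ‖(k1 : ℚ_[p])‖ * ‖B1‖ ≤ 1 := by
        have := mul_le_mul (mul_le_mul (norm_nat_cast_succ (p := p) a')
          (norm_nat_le_one (p := p) k1) (norm_nonneg _) zero_le_one) hnB1 (norm_nonneg _) (by positivity)
        simpa using this
      have hb : ‖((b' : ℚ_[p]) + 1)‖ * ‖(k2 : ℚ_[p])‖ * ‖B2‖ ≤ 1 := by
        have := mul_le_mul (mul_le_mul (norm_nat_cast_succ (p := p) b')
          (norm_nat_le_one (p := p) k2) (norm_nonneg _) zero_le_one) hnB2 (norm_nonneg _) (by positivity)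
        simpa using this
      have := mul_le_mul ha hb (by positivity) zero_le_one
      simpa using this
    calc ‖(M : ℚ_[p])‖ ^ 2 * ‖((a' : ℚ_[p]) + 1) * (k1 : ℚ_[p]) * B1
        * (((b' : ℚ_[p]) + 1) * (k2 : ℚ_[p]) * B2)‖ ≤ ‖(M : ℚ_[p])‖ ^ 2 * 1 :=
          mul_le_mul_of_nonneg_left hrest (by positivity)
      _ = ‖(M : ℚ_[p])‖ ^ 2 := mul_one _
  exact norm_tri step1 step2

lemma inv_cancel {Mn c c' z : ℕ} (hcc : (c * c') % Mn = 1 % Mn) (hz : z < Mn) :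
    c' * (c * z % Mn) % Mn = z := by
  have h4 : c' * (c * z % Mn) ≡ z [MOD Mn] := by
    calc c' * (c * z % Mn) ≡ c' * (c * z) [MOD Mn] :=
          Nat.ModEq.mul_left c' (Nat.mod_modEq (c * z) Mn)
      _ = (c * c') * z := by ring
      _ ≡ 1 * z [MOD Mn] := Nat.ModEq.mul_right z hcc
      _ = z := one_mul z
  have h5 : c' * (c * z % Mn) % Mn = z % Mn := h4
  rwa [Nat.mod_eq_of_lt hz] at h5

lemma OSet_scale_mem {Mn d : ℕ} (hpM : p ∣ Mn) (hM0 : 0 < Mn) (hd : ¬ p ∣ d)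
    {z : ℕ × ℕ} (hz : z ∈ OSet p Mn) : (d * z.1 % Mn, d * z.2 % Mn) ∈ OSet p Mn := by
  rw [mem_OSet] at hz ⊢
  obtain ⟨h1, h2, hd1, hd2, hne⟩ := hz
  have hdz1 : ¬ p ∣ d * z.1 := fun h =>
    (hp.out.dvd_mul.mp h).elim (fun h' => hd h') (fun h' => hd1 h')
  have hdz2 : ¬ p ∣ d * z.2 := fun h =>
    (hp.out.dvd_mul.mp h).elim (fun h' => hd h') (fun h' => hd2 h')
  have hdc : ((d : ZMod p)) ≠ 0 := fun h =>
    hd ((ZMod.natCast_eq_zero_iff _ _).mp h)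
  refine ⟨Nat.mod_lt _ hM0, Nat.mod_lt _ hM0,
    fun h => hdz1 ((Nat.dvd_mod_iff hpM).mp h),
    fun h => hdz2 ((Nat.dvd_mod_iff hpM).mp h), ?_⟩
  rw [cast_mod_M hpM, cast_mod_M hpM]
  push_cast
  intro h
  exact hne (mul_left_cancel₀ hdc h)

lemma O_small {m s1 s2 : ℕ} (hm : 1 ≤ m) (hs : ¬ (p - 1) ∣ (s1 + 1 + (s2 + 1))) :
    ‖∑ z ∈ OSet p (p ^ m), ((z.1 : ℚ_[p]) ^ (s1 + 1))⁻¹ * ((z.2 : ℚ_[p]) ^ (s2 + 1))⁻¹‖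
      ≤ (p : ℝ) ^ (-(m : ℤ)) := by
  have hppos : (0 : ℝ) < p := by exact_mod_cast hp.out.pos
  have hcpos : (0 : ℝ) < (p : ℝ) ^ (-(m : ℤ)) := zpow_pos hppos _
  set Mn := p ^ m with hMn
  have hpM : p ∣ Mn := dvd_pow_self p (by omega)
  have hM0 : 0 < Mn := pow_pos hp.out.pos m
  have hM1 : 1 < Mn := Nat.one_lt_pow (by omega) hp.out.one_lt
  have hnormM : ‖(Mn : ℚ_[p])‖ = (p : ℝ) ^ (-(m : ℤ)) := norm_M_pow
  obtain ⟨c, hc, hcs⟩ := exists_nonroot (s1 + 1 + (s2 + 1)) hs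
  have hcop : Nat.Coprime c Mn :=
    Nat.Coprime.pow_right m ((hp.out.coprime_iff_not_dvd.mpr hc).symm)
  obtain ⟨c', -, hcc'⟩ := Nat.exists_mul_mod_eq_one_of_coprime hcop hM1
  have hcc1 : (c * c') % Mn = 1 % Mn := by rw [hcc', Nat.mod_eq_of_lt hM1]
  have hcc2 : (c' * c) % Mn = 1 % Mn := by rwa [mul_comm] at hcc1
  have hc'p : ¬ p ∣ c' := by
    intro h
    have h1 : p ∣ c * c' := Dvd.dvd.mul_left h c
    have h2 : p ∣ (c * c') % Mn := (Nat.dvd_mod_iff hpM).mpr h1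
    rw [hcc'] at h2
    exact Nat.Prime.one_lt hp.out |>.ne' (Nat.dvd_one.mp h2)
  set f : ℕ × ℕ → ℚ_[p] :=
    fun z => ((z.1 : ℚ_[p]) ^ (s1 + 1))⁻¹ * ((z.2 : ℚ_[p]) ^ (s2 + 1))⁻¹ with hf
  have reindex : ∑ z ∈ OSet p Mn, f (c * z.1 % Mn, c * z.2 % Mn) = ∑ z ∈ OSet p Mn, f z := by
    refine Finset.sum_nbij' (fun z => (c * z.1 % Mn, c * z.2 % Mn))
      (fun z => (c' * z.1 % Mn, c' * z.2 % Mn)) ?_ ?_ ?_ ?_ ?_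
    · intro z hz; exact OSet_scale_mem hpM hM0 hc hz
    · intro z hz; exact OSet_scale_mem hpM hM0 hc'p hz
    · intro z hz
      rw [mem_OSet] at hz
      exact Prod.ext (inv_cancel hcc1 hz.1) (inv_cancel hcc1 hz.2.1)
    · intro z hz
      rw [mem_OSet] at hz
      exact Prod.ext (inv_cancel hcc2 hz.1) (inv_cancel hcc2 hz.2.1)
    · intro z _; rfl
  set C : ℚ_[p] := (((c : ℚ_[p])) ^ (s1 + 1 + (s2 + 1)))⁻¹ with hC
  set S : ℚ_[p] := ∑ z ∈ OSet p Mn, f z with hS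
  have hterm : ∀ z ∈ OSet p Mn, ‖f (c * z.1 % Mn, c * z.2 % Mn) - C * f z‖
      ≤ (p : ℝ) ^ (-(m : ℤ)) := by
    intro z hz
    rw [mem_OSet] at hz
    obtain ⟨h1, h2, hd1, hd2, hne⟩ := hz
    have key : ∀ (zz ss : ℕ), ¬ p ∣ zz →
        ‖(((c * zz % Mn : ℕ) : ℚ_[p]) ^ (ss + 1))⁻¹
          - ((c : ℚ_[p]) ^ (ss + 1))⁻¹ * ((zz : ℚ_[p]) ^ (ss + 1))⁻¹‖ ≤ (p : ℝ) ^ (-(m : ℤ)) := by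
      intro zz ss hzz
      have hdz : ¬ p ∣ c * zz := fun h =>
        (hp.out.dvd_mul.mp h).elim (fun h' => hc h') (fun h' => hzz h')
      have hdzm : ¬ p ∣ (c * zz % Mn) := fun h => hdz ((Nat.dvd_mod_iff hpM).mp h)
      have hclose : ‖((c * zz % Mn : ℕ) : ℚ_[p]) - ((c * zz : ℕ) : ℚ_[p])‖
          ≤ (p : ℝ) ^ (-(m : ℤ)) := by
        rw [← hnormM]; exact mod_close Mn (c * zz)
      have step := inv_pow_congr hdzm hdz (ss + 1) hclose
      have heq : (((c * zz : ℕ) : ℚ_[p]) ^ (ss + 1))⁻¹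
          = ((c : ℚ_[p]) ^ (ss + 1))⁻¹ * ((zz : ℚ_[p]) ^ (ss + 1))⁻¹ := by
        push_cast
        rw [mul_pow, mul_inv]
      rwa [heq] at step
    have h1t := key z.1 s1 hd1
    have h2t := key z.2 s2 hd2
    have hn2 : ‖(((c * z.2 % Mn : ℕ) : ℚ_[p]) ^ (s2 + 1))⁻¹‖ ≤ 1 := by
      have hdz : ¬ p ∣ c * z.2 := fun h =>
        (hp.out.dvd_mul.mp h).elim (fun h' => hc h') (fun h' => hd2 h')
      exact le_of_eq (norm_iv_eq_one (fun h => hdz ((Nat.dvd_mod_iff hpM).mp h)) _)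
    have hn1 : ‖((c : ℚ_[p]) ^ (s1 + 1))⁻¹ * ((z.1 : ℚ_[p]) ^ (s1 + 1))⁻¹‖ ≤ 1 := by
      rw [norm_mul, norm_iv_eq_one hc, norm_iv_eq_one hd1, one_mul]
    have hmc := norm_mul_congr h1t h2t hn2 hn1
    have hfinal : ((c : ℚ_[p]) ^ (s1 + 1))⁻¹ * ((z.1 : ℚ_[p]) ^ (s1 + 1))⁻¹
        * (((c : ℚ_[p]) ^ (s2 + 1))⁻¹ * ((z.2 : ℚ_[p]) ^ (s2 + 1))⁻¹) = C * f z := by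
      rw [hC, hf]
      rw [show ((c : ℚ_[p]) ^ (s1 + 1 + (s2 + 1)))⁻¹
        = ((c : ℚ_[p]) ^ (s1 + 1))⁻¹ * ((c : ℚ_[p]) ^ (s2 + 1))⁻¹ from by rw [pow_add, mul_inv]]
      ring
    rwa [hfinal] at hmc
  have hsum : ‖S - C * S‖ ≤ (p : ℝ) ^ (-(m : ℤ)) := by
    have e1 : S - C * S = (∑ z ∈ OSet p Mn, f (c * z.1 % Mn, c * z.2 % Mn))
        - ∑ z ∈ OSet p Mn, C * f z := by
      rw [reindex, ← Finset.mul_sum, ← hS]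
    rw [e1]
    exact norm_sub_sum_le _ _ _ (le_of_lt hcpos) hterm
  have hc0 : (c : ℚ_[p]) ≠ 0 := nat_ne_zero_Q hc
  have hjnorm : ‖(c : ℚ_[p]) ^ (s1 + 1 + (s2 + 1)) - 1‖ = 1 := by
    have hjd : ¬ (p : ℤ) ∣ ((c : ℤ) ^ (s1 + 1 + (s2 + 1)) - 1) := by
      intro hdvd
      have h0 : (((c : ℤ) ^ (s1 + 1 + (s2 + 1)) - 1 : ℤ) : ZMod p) = 0 :=
        (ZMod.intCast_zmod_eq_zero_iff_dvd _ _).mpr hdvd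
      push_cast at h0
      exact hcs (by linear_combination h0)
    have := norm_int_eq_one (p := p) hjd
    have hcast : (((c : ℤ) ^ (s1 + 1 + (s2 + 1)) - 1 : ℤ) : ℚ_[p])
        = (c : ℚ_[p]) ^ (s1 + 1 + (s2 + 1)) - 1 := by push_cast; ring
    rwa [hcast] at this
  have h1C : ‖(1 : ℚ_[p]) - C‖ = 1 := by
    have hid : (1 : ℚ_[p]) - C = C * ((c : ℚ_[p]) ^ (s1 + 1 + (s2 + 1)) - 1) := by
      rw [hC]
      field_simp
    rw [hid, norm_mul, norm_iv_eq_one hc, hjnorm, one_mul]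
  have hfac : S * ((1 : ℚ_[p]) - C) = S - C * S := by ring
  calc ‖S‖ = ‖S‖ * ‖(1 : ℚ_[p]) - C‖ := by rw [h1C, mul_one]
    _ = ‖S * ((1 : ℚ_[p]) - C)‖ := (norm_mul _ _).symm
    _ = ‖S - C * S‖ := by rw [hfac]
    _ ≤ (p : ℝ) ^ (-(m : ℤ)) := hsum

end E

noncomputable def HQ (p : ℕ) [Fact p.Prime] (A B N : ℕ) : ℚ_[p] :=
  ∑ u ∈ HSet p N, ((u.1 : ℚ_[p]) ^ A)⁻¹ * ((u.2 : ℚ_[p]) ^ B)⁻¹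

section F
variable {p : ℕ} [hp : Fact p.Prime]

lemma norm_T_le_one {A B z1 z2 : ℕ} (h1 : ¬ p ∣ z1) (h2 : ¬ p ∣ z2) :
    ‖((z1 : ℚ_[p]) ^ A)⁻¹ * ((z2 : ℚ_[p]) ^ B)⁻¹‖ ≤ 1 := by
  rw [norm_mul, norm_iv_eq_one h1, norm_iv_eq_one h2, one_mul]

lemma norm_sumT_le_one (s : Finset (ℕ × ℕ)) (hs : ∀ z ∈ s, ¬ p ∣ z.1 ∧ ¬ p ∣ z.2) (A B : ℕ) :
    ‖∑ z ∈ s, ((z.1 : ℚ_[p]) ^ A)⁻¹ * ((z.2 : ℚ_[p]) ^ B)⁻¹‖ ≤ 1 :=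
  norm_sum_le_of _ _ zero_le_one fun z hz => norm_T_le_one (hs z hz).1 (hs z hz).2

lemma HSet_not_dvd {N : ℕ} {z : ℕ × ℕ} (h : z ∈ HSet p N) : ¬ p ∣ z.1 ∧ ¬ p ∣ z.2 := by
  rw [mem_HSet] at h; exact ⟨h.2.2.2.2.1, h.2.2.2.2.2.1⟩

lemma OSet_not_dvd {N : ℕ} {z : ℕ × ℕ} (h : z ∈ OSet p N) : ¬ p ∣ z.1 ∧ ¬ p ∣ z.2 := by
  rw [mem_OSet] at h; exact ⟨h.2.2.1, h.2.2.2.1⟩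

lemma main_step {a' b' m : ℕ} (hp5 : 5 ≤ p) (hm : 1 ≤ m)
    (hab : ¬ (p - 1) ∣ (a' + 1 + (b' + 1))) :
    ‖HQ p (a' + 1) (b' + 1) (p ^ (m + 1)) - (p : ℚ_[p]) * HQ p (a' + 1) (b' + 1) (p ^ m)‖
      ≤ (p : ℝ) ^ (-((m : ℤ) + 1)) := by
  have hppos : (0 : ℝ) < p := by exact_mod_cast hp.out.pos
  have hp1R : (1 : ℝ) < p := by exact_mod_cast hp.out.one_lt
  set M := p ^ m with hMdef
  have hpM : p ∣ M := dvd_pow_self p (by omega)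
  have hM0 : 0 < M := pow_pos hp.out.pos m
  have hNM : p ^ (m + 1) = p * M := by rw [pow_succ]; ring
  have hnormM : ‖(M : ℚ_[p])‖ = (p : ℝ) ^ (-(m : ℤ)) := norm_M_pow
  have htpos : (0 : ℝ) < (p : ℝ) ^ (-((m : ℤ) + 1)) := zpow_pos hppos _
  have hM2le : ‖(M : ℚ_[p])‖ ^ 2 ≤ (p : ℝ) ^ (-((m : ℤ) + 1)) := by
    rw [hnormM, ← zpow_natCast ((p : ℝ) ^ (-(m : ℤ))) 2, ← zpow_mul]
    refine zpow_le_zpow_right₀ (le_of_lt hp1R) ?_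
    push_cast
    omega
  have hmul_p : (p : ℝ) ^ (-(m : ℤ)) * (p : ℝ)⁻¹ = (p : ℝ) ^ (-((m : ℤ) + 1)) := by
    rw [← zpow_neg_one, ← zpow_add₀ (ne_of_gt hppos)]
    congr 1
    ring
  -- notation for the pieces
  set Ca : ℚ_[p] := (a' : ℚ_[p]) + 1 with hCa
  set Cb : ℚ_[p] := (b' : ℚ_[p]) + 1 with hCb
  set T : ℕ × ℕ → ℚ_[p] :=
    fun z => ((z.1 : ℚ_[p]) ^ (a' + 1))⁻¹ * ((z.2 : ℚ_[p]) ^ (b' + 1))⁻¹ with hT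
  set X : ℕ × ℕ → ℚ_[p] :=
    fun z => ((z.1 : ℚ_[p]) ^ (a' + 2))⁻¹ * ((z.2 : ℚ_[p]) ^ (b' + 1))⁻¹ with hX
  set Y : ℕ × ℕ → ℚ_[p] :=
    fun z => ((z.1 : ℚ_[p]) ^ (a' + 1))⁻¹ * ((z.2 : ℚ_[p]) ^ (b' + 2))⁻¹ with hY
  have hnormCa : ‖Ca‖ ≤ 1 := norm_nat_cast_succ a'
  have hnormCb : ‖Cb‖ ≤ 1 := norm_nat_cast_succ b'
  -- the split
  have hsplit : HQ p (a' + 1) (b' + 1) (p ^ (m + 1))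
      = (∑ k ∈ Finset.range p, ∑ z ∈ HSet p M,
          (((z.1 + k * M : ℕ) : ℚ_[p]) ^ (a' + 1))⁻¹ * (((z.2 + k * M : ℕ) : ℚ_[p]) ^ (b' + 1))⁻¹)
        + ∑ q ∈ KS' p ×ˢ OSet p M,
          (((q.2.1 + q.1.1 * M : ℕ) : ℚ_[p]) ^ (a' + 1))⁻¹
            * (((q.2.2 + q.1.2 * M : ℕ) : ℚ_[p]) ^ (b' + 1))⁻¹ := by
    rw [HQ, hNM]
    exact key_split M hpM hM0
      (fun u1 u2 => ((u1 : ℚ_[p]) ^ (a' + 1))⁻¹ * ((u2 : ℚ_[p]) ^ (b' + 1))⁻¹)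
  -- diagonal part
  set HQM : ℚ_[p] := HQ p (a' + 1) (b' + 1) M with hHQM
  set SX : ℚ_[p] := ∑ z ∈ HSet p M, X z with hSX
  set SY : ℚ_[p] := ∑ z ∈ HSet p M, Y z with hSY
  set Sk : ℚ_[p] := ∑ k ∈ Finset.range p, (k : ℚ_[p]) with hSk
  have hGd : ∀ k : ℕ, ∑ z ∈ HSet p M,
      (T z - (M : ℚ_[p]) * (Ca * (k : ℚ_[p]) * X z + Cb * (k : ℚ_[p]) * Y z))
      = HQM - (M : ℚ_[p]) * Ca * SX * (k : ℚ_[p]) - (M : ℚ_[p]) * Cb * SY * (k : ℚ_[p]) := by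
    intro k
    have e : ∀ z : ℕ × ℕ, T z - (M : ℚ_[p]) * (Ca * (k : ℚ_[p]) * X z + Cb * (k : ℚ_[p]) * Y z)
        = T z - ((M : ℚ_[p]) * Ca * (k : ℚ_[p])) * X z - ((M : ℚ_[p]) * Cb * (k : ℚ_[p])) * Y z :=
      fun z => by ring
    rw [Finset.sum_congr rfl fun z _ => e z]
    rw [Finset.sum_sub_distrib, Finset.sum_sub_distrib, ← Finset.mul_sum, ← Finset.mul_sum]
    rw [hHQM, HQ, ← hSX, ← hSY, ← hT]
    ring
  have hdiag_sum : ∑ k ∈ Finset.range p, (HQM - (M : ℚ_[p]) * Ca * SX * (k : ℚ_[p])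
        - (M : ℚ_[p]) * Cb * SY * (k : ℚ_[p]))
      = (p : ℚ_[p]) * HQM - (M : ℚ_[p]) * Ca * SX * Sk - (M : ℚ_[p]) * Cb * SY * Sk := by
    rw [Finset.sum_sub_distrib, Finset.sum_sub_distrib, Finset.sum_const, Finset.card_range,
      ← Finset.mul_sum, ← Finset.mul_sum, ← hSk, nsmul_eq_mul]
  have hdiag_close : ‖(∑ k ∈ Finset.range p, ∑ z ∈ HSet p M,
      (((z.1 + k * M : ℕ) : ℚ_[p]) ^ (a' + 1))⁻¹ * (((z.2 + k * M : ℕ) : ℚ_[p]) ^ (b' + 1))⁻¹)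
      - ((p : ℚ_[p]) * HQM - (M : ℚ_[p]) * Ca * SX * Sk - (M : ℚ_[p]) * Cb * SY * Sk)‖
      ≤ (p : ℝ) ^ (-((m : ℤ) + 1)) := by
    rw [← hdiag_sum]
    refine norm_sub_sum_le _ _ _ (le_of_lt htpos) fun k _ => ?_
    rw [← hGd k]
    refine norm_sub_sum_le _ _ _ (le_of_lt htpos) fun z hz => ?_
    obtain ⟨hz1, hz2⟩ := HSet_not_dvd hz
    exact le_trans (pair_expand hpM hz1 hz2) hM2le
  -- bounds on the correction terms
  have hSk_norm : ‖Sk‖ ≤ (p : ℝ)⁻¹ := by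
    rw [hSk, show ∑ k ∈ Finset.range p, (k : ℚ_[p])
      = ((∑ k ∈ Finset.range p, k : ℕ) : ℚ_[p]) from (Nat.cast_sum _ _).symm]
    exact norm_nat_dvd_le (nd1 (by omega))
  have hSX_norm : ‖SX‖ ≤ 1 := norm_sumT_le_one _ (fun z hz => HSet_not_dvd hz) _ _
  have hSY_norm : ‖SY‖ ≤ 1 := norm_sumT_le_one _ (fun z hz => HSet_not_dvd hz) _ _
  have hcorr : ∀ (Cc SS : ℚ_[p]), ‖Cc‖ ≤ 1 → ‖SS‖ ≤ 1 →
      ‖(M : ℚ_[p]) * Cc * SS * Sk‖ ≤ (p : ℝ) ^ (-((m : ℤ) + 1)) := by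
    intro Cc SS hCc hSS
    rw [norm_mul, norm_mul, norm_mul, hnormM]
    calc (p : ℝ) ^ (-(m : ℤ)) * ‖Cc‖ * ‖SS‖ * ‖Sk‖
        ≤ (p : ℝ) ^ (-(m : ℤ)) * 1 * 1 * (p : ℝ)⁻¹ := by
          refine mul_le_mul (mul_le_mul (mul_le_mul le_rfl hCc (norm_nonneg _)
            (le_of_lt (zpow_pos hppos _))) hSS (norm_nonneg _) ?_) hSk_norm (norm_nonneg _) ?_
          · positivity
          · positivity
      _ = (p : ℝ) ^ (-((m : ℤ) + 1)) := by rw [mul_one, mul_one, hmul_p]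
  have hdiag : ‖(∑ k ∈ Finset.range p, ∑ z ∈ HSet p M,
      (((z.1 + k * M : ℕ) : ℚ_[p]) ^ (a' + 1))⁻¹ * (((z.2 + k * M : ℕ) : ℚ_[p]) ^ (b' + 1))⁻¹)
      - (p : ℚ_[p]) * HQM‖ ≤ (p : ℝ) ^ (-((m : ℤ) + 1)) := by
    refine norm_tri hdiag_close ?_
    have hid : ((p : ℚ_[p]) * HQM - (M : ℚ_[p]) * Ca * SX * Sk - (M : ℚ_[p]) * Cb * SY * Sk)
        - (p : ℚ_[p]) * HQM
        = -((M : ℚ_[p]) * Ca * SX * Sk) + -((M : ℚ_[p]) * Cb * SY * Sk) := by ring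
    rw [hid]
    refine le_trans (Padic.nonarchimedean _ _) (max_le ?_ ?_)
    · rw [norm_neg]; exact hcorr Ca SX hnormCa hSX_norm
    · rw [norm_neg]; exact hcorr Cb SY hnormCb hSY_norm
  -- off-diagonal part
  set OT : ℚ_[p] := ∑ z ∈ OSet p M, T z with hOT
  set OX : ℚ_[p] := ∑ z ∈ OSet p M, X z with hOX
  set OY : ℚ_[p] := ∑ z ∈ OSet p M, Y z with hOY
  set Sk1 : ℚ_[p] := ∑ kk ∈ KS' p, (kk.1 : ℚ_[p]) with hSk1
  set Sk2 : ℚ_[p] := ∑ kk ∈ KS' p, (kk.2 : ℚ_[p]) with hSk2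
  have hoff_sum : ∑ kk ∈ KS' p, (OT - (M : ℚ_[p]) * Ca * OX * (kk.1 : ℚ_[p])
        - (M : ℚ_[p]) * Cb * OY * (kk.2 : ℚ_[p]))
      = ((KS' p).card : ℚ_[p]) * OT - (M : ℚ_[p]) * Ca * OX * Sk1
        - (M : ℚ_[p]) * Cb * OY * Sk2 := by
    rw [Finset.sum_sub_distrib, Finset.sum_sub_distrib, Finset.sum_const,
      ← Finset.mul_sum, ← Finset.mul_sum, ← hSk1, ← hSk2, nsmul_eq_mul]
  have hGo : ∀ kk : ℕ × ℕ, ∑ z ∈ OSet p M,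
      (T z - (M : ℚ_[p]) * (Ca * (kk.1 : ℚ_[p]) * X z + Cb * (kk.2 : ℚ_[p]) * Y z))
      = OT - (M : ℚ_[p]) * Ca * OX * (kk.1 : ℚ_[p]) - (M : ℚ_[p]) * Cb * OY * (kk.2 : ℚ_[p]) := by
    intro kk
    have e : ∀ z : ℕ × ℕ,
        T z - (M : ℚ_[p]) * (Ca * (kk.1 : ℚ_[p]) * X z + Cb * (kk.2 : ℚ_[p]) * Y z)
        = T z - ((M : ℚ_[p]) * Ca * (kk.1 : ℚ_[p])) * X z
          - ((M : ℚ_[p]) * Cb * (kk.2 : ℚ_[p])) * Y z := fun z => by ring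
    rw [Finset.sum_congr rfl fun z _ => e z]
    rw [Finset.sum_sub_distrib, Finset.sum_sub_distrib, ← Finset.mul_sum, ← Finset.mul_sum,
      ← hOT, ← hOX, ← hOY]
    ring
  have hoff_close : ‖(∑ q ∈ KS' p ×ˢ OSet p M,
      (((q.2.1 + q.1.1 * M : ℕ) : ℚ_[p]) ^ (a' + 1))⁻¹
        * (((q.2.2 + q.1.2 * M : ℕ) : ℚ_[p]) ^ (b' + 1))⁻¹)
      - (((KS' p).card : ℚ_[p]) * OT - (M : ℚ_[p]) * Ca * OX * Sk1
          - (M : ℚ_[p]) * Cb * OY * Sk2)‖ ≤ (p : ℝ) ^ (-((m : ℤ) + 1)) := by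
    rw [← hoff_sum, Finset.sum_product]
    refine norm_sub_sum_le _ _ _ (le_of_lt htpos) fun kk _ => ?_
    rw [← hGo kk]
    refine norm_sub_sum_le _ _ _ (le_of_lt htpos) fun z hz => ?_
    obtain ⟨hz1, hz2⟩ := OSet_not_dvd hz
    exact le_trans (pair_expand hpM hz1 hz2) hM2le
  have hKS_eq : KS' p = KS p := rfl
  have hOT_norm : ‖OT‖ ≤ (p : ℝ) ^ (-(m : ℤ)) := by
    rw [hOT, hT]
    exact O_small hm hab
  have hOX_norm : ‖OX‖ ≤ 1 := norm_sumT_le_one _ (fun z hz => OSet_not_dvd hz) _ _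
  have hOY_norm : ‖OY‖ ≤ 1 := norm_sumT_le_one _ (fun z hz => OSet_not_dvd hz) _ _
  have hcard_norm : ‖(((KS' p).card : ℕ) : ℚ_[p])‖ ≤ (p : ℝ)⁻¹ := by
    rw [hKS_eq]
    exact norm_nat_dvd_le (ndcard hp5)
  have hcardOT : ‖(((KS' p).card : ℕ) : ℚ_[p]) * OT‖ ≤ (p : ℝ) ^ (-((m : ℤ) + 1)) := by
    rw [norm_mul]
    calc ‖(((KS' p).card : ℕ) : ℚ_[p])‖ * ‖OT‖ ≤ (p : ℝ)⁻¹ * (p : ℝ) ^ (-(m : ℤ)) :=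
          mul_le_mul hcard_norm hOT_norm (norm_nonneg _) (by positivity)
      _ = (p : ℝ) ^ (-((m : ℤ) + 1)) := by rw [mul_comm, hmul_p]
  have hcorr2 : ∀ (Cc SS Skk : ℚ_[p]), ‖Cc‖ ≤ 1 → ‖SS‖ ≤ 1 → ‖Skk‖ ≤ (p : ℝ)⁻¹ →
      ‖(M : ℚ_[p]) * Cc * SS * Skk‖ ≤ (p : ℝ) ^ (-((m : ℤ) + 1)) := by
    intro Cc SS Skk hCc hSS hSkk
    rw [norm_mul, norm_mul, norm_mul, hnormM]
    calc (p : ℝ) ^ (-(m : ℤ)) * ‖Cc‖ * ‖SS‖ * ‖Skk‖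
        ≤ (p : ℝ) ^ (-(m : ℤ)) * 1 * 1 * (p : ℝ)⁻¹ := by
          refine mul_le_mul (mul_le_mul (mul_le_mul le_rfl hCc (norm_nonneg _)
            (le_of_lt (zpow_pos hppos _))) hSS (norm_nonneg _) ?_) hSkk (norm_nonneg _) ?_
          · positivity
          · positivity
      _ = (p : ℝ) ^ (-((m : ℤ) + 1)) := by rw [mul_one, mul_one, hmul_p]
  have hSk1_norm : ‖Sk1‖ ≤ (p : ℝ)⁻¹ := by
    rw [hSk1, show ∑ kk ∈ KS' p, (kk.1 : ℚ_[p])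
      = ((∑ kk ∈ KS' p, kk.1 : ℕ) : ℚ_[p]) from (Nat.cast_sum _ _).symm, hKS_eq]
    exact norm_nat_dvd_le (nd3 hp5)
  have hSk2_norm : ‖Sk2‖ ≤ (p : ℝ)⁻¹ := by
    rw [hSk2, show ∑ kk ∈ KS' p, (kk.2 : ℚ_[p])
      = ((∑ kk ∈ KS' p, kk.2 : ℕ) : ℚ_[p]) from (Nat.cast_sum _ _).symm, hKS_eq]
    exact norm_nat_dvd_le (nd4 hp5)
  have hoff : ‖∑ q ∈ KS' p ×ˢ OSet p M,
      (((q.2.1 + q.1.1 * M : ℕ) : ℚ_[p]) ^ (a' + 1))⁻¹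
        * (((q.2.2 + q.1.2 * M : ℕ) : ℚ_[p]) ^ (b' + 1))⁻¹‖
      ≤ (p : ℝ) ^ (-((m : ℤ) + 1)) := by
    have hval : ‖((KS' p).card : ℚ_[p]) * OT - (M : ℚ_[p]) * Ca * OX * Sk1
        - (M : ℚ_[p]) * Cb * OY * Sk2‖ ≤ (p : ℝ) ^ (-((m : ℤ) + 1)) := by
      have hid : ((KS' p).card : ℚ_[p]) * OT - (M : ℚ_[p]) * Ca * OX * Sk1
          - (M : ℚ_[p]) * Cb * OY * Sk2
          = ((KS' p).card : ℚ_[p]) * OT + (-((M : ℚ_[p]) * Ca * OX * Sk1)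
            + -((M : ℚ_[p]) * Cb * OY * Sk2)) := by ring
      rw [hid]
      refine le_trans (Padic.nonarchimedean _ _) (max_le hcardOT ?_)
      refine le_trans (Padic.nonarchimedean _ _) (max_le ?_ ?_)
      · rw [norm_neg]; exact hcorr2 Ca OX Sk1 hnormCa hOX_norm hSk1_norm
      · rw [norm_neg]; exact hcorr2 Cb OY Sk2 hnormCb hOY_norm hSk2_norm
    have := norm_sub_max (∑ q ∈ KS' p ×ˢ OSet p M,
      (((q.2.1 + q.1.1 * M : ℕ) : ℚ_[p]) ^ (a' + 1))⁻¹
        * (((q.2.2 + q.1.2 * M : ℕ) : ℚ_[p]) ^ (b' + 1))⁻¹)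
      (((KS' p).card : ℚ_[p]) * OT - (M : ℚ_[p]) * Ca * OX * Sk1
        - (M : ℚ_[p]) * Cb * OY * Sk2) 0
    rw [sub_zero, sub_zero] at this
    exact le_trans this (max_le hoff_close hval)
  -- combine
  rw [hsplit]
  have hid2 : (∑ k ∈ Finset.range p, ∑ z ∈ HSet p M,
      (((z.1 + k * M : ℕ) : ℚ_[p]) ^ (a' + 1))⁻¹ * (((z.2 + k * M : ℕ) : ℚ_[p]) ^ (b' + 1))⁻¹)
      + (∑ q ∈ KS' p ×ˢ OSet p M,
        (((q.2.1 + q.1.1 * M : ℕ) : ℚ_[p]) ^ (a' + 1))⁻¹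
          * (((q.2.2 + q.1.2 * M : ℕ) : ℚ_[p]) ^ (b' + 1))⁻¹)
      - (p : ℚ_[p]) * HQM
      = ((∑ k ∈ Finset.range p, ∑ z ∈ HSet p M,
      (((z.1 + k * M : ℕ) : ℚ_[p]) ^ (a' + 1))⁻¹ * (((z.2 + k * M : ℕ) : ℚ_[p]) ^ (b' + 1))⁻¹)
      - (p : ℚ_[p]) * HQM)
      + (∑ q ∈ KS' p ×ˢ OSet p M,
        (((q.2.1 + q.1.1 * M : ℕ) : ℚ_[p]) ^ (a' + 1))⁻¹
          * (((q.2.2 + q.1.2 * M : ℕ) : ℚ_[p]) ^ (b' + 1))⁻¹) := by ring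
  rw [hid2]
  exact le_trans (Padic.nonarchimedean _ _) (max_le hdiag hoff)

end F

/-- `ℋ_N(a,b) = ∑_{0<u1<u2<N, p∤u1, p∤u2, p∤(u2-u1)} 1/(u1^a u2^b)`. -/
def Hcal (p N a b : ℕ) : ℚ :=
  ∑ u ∈ (Finset.range N ×ˢ Finset.range N).filter
      (fun u : ℕ × ℕ => 0 < u.1 ∧ u.1 < u.2 ∧
        ¬ p ∣ u.1 ∧ ¬ p ∣ u.2 ∧ ¬ p ∣ (u.2 - u.1)),
    1 / ((u.1 : ℚ) ^ a * (u.2 : ℚ) ^ b)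

section G
variable {p : ℕ} [hp : Fact p.Prime]

lemma tower {a' b' : ℕ} (hp5 : 5 ≤ p) (hab : ¬ (p - 1) ∣ (a' + 1 + (b' + 1))) :
    ∀ r : ℕ, 1 ≤ r →
      ‖HQ p (a' + 1) (b' + 1) (p ^ r)
          - (p : ℚ_[p]) ^ (r - 1) * HQ p (a' + 1) (b' + 1) p‖
        ≤ (p : ℝ) ^ (-(r : ℤ)) := by
  have hppos : (0 : ℝ) < p := by exact_mod_cast hp.out.pos
  intro r hr
  induction r, hr using Nat.le_induction with
  | base =>
    rw [pow_one, show (1 : ℕ) - 1 = 0 from rfl, pow_zero, one_mul, sub_self, norm_zero]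
    positivity
  | succ n hn ih =>
    have h1 := main_step (a' := a') (b' := b') hp5 hn hab
    have hexp : (p : ℝ) ^ (-((n : ℤ) + 1)) = (p : ℝ) ^ (-((n + 1 : ℕ) : ℤ)) := by
      norm_cast
    rw [hexp] at h1
    have hfac : (p : ℚ_[p]) * HQ p (a' + 1) (b' + 1) (p ^ n)
        - (p : ℚ_[p]) ^ (n + 1 - 1) * HQ p (a' + 1) (b' + 1) p
        = (p : ℚ_[p]) * (HQ p (a' + 1) (b' + 1) (p ^ n)
            - (p : ℚ_[p]) ^ (n - 1) * HQ p (a' + 1) (b' + 1) p) := by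
      rw [show n + 1 - 1 = n from by omega,
        show (p : ℚ_[p]) ^ n = (p : ℚ_[p]) * (p : ℚ_[p]) ^ (n - 1) from by
          conv_lhs => rw [show n = (n - 1) + 1 from by omega]
          rw [pow_succ]; ring]
      ring
    have h2 : ‖(p : ℚ_[p]) * HQ p (a' + 1) (b' + 1) (p ^ n)
        - (p : ℚ_[p]) ^ (n + 1 - 1) * HQ p (a' + 1) (b' + 1) p‖
        ≤ (p : ℝ) ^ (-((n + 1 : ℕ) : ℤ)) := by
      rw [hfac, norm_mul, Padic.norm_p]
      calc (p : ℝ)⁻¹ * ‖HQ p (a' + 1) (b' + 1) (p ^ n)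
          - (p : ℚ_[p]) ^ (n - 1) * HQ p (a' + 1) (b' + 1) p‖
          ≤ (p : ℝ)⁻¹ * (p : ℝ) ^ (-(n : ℤ)) :=
            mul_le_mul_of_nonneg_left ih (by positivity)
        _ = (p : ℝ) ^ (-((n + 1 : ℕ) : ℤ)) := by
            rw [mul_comm, ← zpow_neg_one, ← zpow_add₀ (ne_of_gt hppos)]
            congr 1
            omega
    exact norm_tri h1 h2

lemma Hcal_cast (A B N : ℕ) : ((Hcal p N A B : ℚ) : ℚ_[p]) = HQ p A B N := by
  rw [Hcal, HQ, Rat.cast_sum]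
  refine Finset.sum_congr rfl fun u hu => ?_
  push_cast
  rw [one_div, mul_inv]

end G

/-- For a prime `p` and `a, b, r ≥ 1` with `p > a + b` and `a + b` odd,
`ℋ_{p^r}(a,b) ≡ p^{r-1} ℋ_p(a,b) (mod p^r)` as `p`-integral rationals. -/
theorem stmt_10 (p : ℕ) (hp : p.Prime) (a b r : ℕ)
    (ha : 0 < a) (hb : 0 < b) (hr : 1 ≤ r)
    (hw : p > a + b) (hodd : Odd (a + b)) :
    padicNorm p (Hcal p (p ^ r) a b - (p : ℚ) ^ (r - 1) * Hcal p p a b)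
      ≤ (p : ℚ) ^ (-(r : ℤ)) := by
  haveI : Fact p.Prime := ⟨hp⟩
  obtain ⟨a', rfl⟩ : ∃ a', a = a' + 1 := ⟨a - 1, by omega⟩
  obtain ⟨b', rfl⟩ : ∃ b', b = b' + 1 := ⟨b - 1, by omega⟩
  obtain ⟨t, ht⟩ := hodd
  have hab3 : 3 ≤ a' + 1 + (b' + 1) := by omega
  have hp5 : 5 ≤ p := by
    by_contra h
    have : p = 4 := by omega
    rw [this] at hp
    norm_num at hp
  have hoddp : Odd p := hp.odd_of_ne_two (by omega)
  obtain ⟨v, hv⟩ := hoddp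
  have hab : ¬ (p - 1) ∣ (a' + 1 + (b' + 1)) := by
    intro hdvd
    have hle : p - 1 ≤ a' + 1 + (b' + 1) := Nat.le_of_dvd (by omega) hdvd
    omega
  have key := tower hp5 hab r hr
  have hcast : ((Hcal p (p ^ r) (a' + 1) (b' + 1)
      - (p : ℚ) ^ (r - 1) * Hcal p p (a' + 1) (b' + 1) : ℚ) : ℚ_[p])
      = HQ p (a' + 1) (b' + 1) (p ^ r)
        - (p : ℚ_[p]) ^ (r - 1) * HQ p (a' + 1) (b' + 1) p := by
    rw [Rat.cast_sub, Rat.cast_mul, Rat.cast_pow, Rat.cast_natCast, Hcal_cast, Hcal_cast]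
  have h2 : ‖((Hcal p (p ^ r) (a' + 1) (b' + 1)
      - (p : ℚ) ^ (r - 1) * Hcal p p (a' + 1) (b' + 1) : ℚ) : ℚ_[p])‖
      ≤ (p : ℝ) ^ (-(r : ℤ)) := by rw [hcast]; exact key
  rw [Padic.eq_padicNorm] at h2
  have h3 : (((p : ℚ) ^ (-(r : ℤ)) : ℚ) : ℝ) = (p : ℝ) ^ (-(r : ℤ)) := by
    rw [Rat.cast_zpow, Rat.cast_natCast]
  rw [← h3] at h2
  exact_mod_cast h2
end

section
/- Let N be a positive integer and α, β, γ positive integers, and let w = α+β+γ. Then for the truncated Mordell–Tornheim sum one has the partial-fraction decomposition T_N(α,β;γ) = ∑_{a=1}^{α} C(α+β-a-1, α-a) ℋ_N(a, w-a) + ∑_{b=1}^{β} C(α+β-b-1, β-b) ℋ_N(b, w-b), where T_N(α,β;γ) := ∑_{k1+k2<N, k1,k2,k1+k2 ∈ S} 1/(k1^α k2^β (k1+k2)^γ) and ℋ_N(s,t) := ∑_{0<u1<u2<N, u1, u2, u2-u1 ∈ S} 1/(u1^s u2^t), for any fixed set S of positive integers (e.g., S = 𝒫_p). -/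
lemma combine (x s : ℚ) (hx : x ≠ 0) (hs : s ≠ 0) (α' n : ℕ) (h : α' < n) :
    (∑ a ∈ Finset.Icc 1 α', ((n-a-1).choose (α'-a) : ℚ) / (x^a * s^(n-a))) / s
    + (∑ a ∈ Finset.Icc 1 (α'+1), ((n-a-1).choose (α'+1-a) : ℚ) / (x^a * s^(n-a))) / s
    = ∑ a ∈ Finset.Icc 1 (α'+1), ((n-a).choose (α'+1-a) : ℚ) / (x^a * s^(n+1-a)) := by
  rw [Finset.sum_Icc_succ_top (by omega), Finset.sum_Icc_succ_top (by omega), add_div,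
    Finset.sum_div, Finset.sum_div]
  rw [← add_assoc, ← Finset.sum_add_distrib]
  congr 1
  · apply Finset.sum_congr rfl
    intro a ha
    simp only [Finset.mem_Icc] at ha
    obtain ⟨m, hm⟩ : ∃ m, n - a = m + 1 := ⟨n - a - 1, by omega⟩
    obtain ⟨k, hk⟩ : ∃ k, α' + 1 - a = k + 1 := ⟨α' - a, by omega⟩
    have h1 : n - a - 1 = m := by omega
    have h2 : α' - a = k := by omega
    have h3 : n + 1 - a = m + 2 := by omega
    rw [h1, h2, hm, hk, h3, Nat.choose_succ_succ]
    push_cast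
    ring
  · have h1 : α' + 1 - (α' + 1) = 0 := by omega
    obtain ⟨m, hm⟩ : ∃ m, n - (α'+1) = m := ⟨_, rfl⟩
    have h2 : n - (α'+1) - 1 = 0 ∨ True := Or.inr trivial
    have h4 : n + 1 - (α'+1) = m + 1 := by omega
    rw [h1, hm, h4, Nat.choose_zero_right, Nat.choose_zero_right, pow_succ]
    field_simp
    ring

lemma pf : ∀ (n α β : ℕ), α + β = n → 0 < n → ∀ x y : ℚ, 0 < x → 0 < y →
    1 / (x^α * y^β) =
      (∑ a ∈ Finset.Icc 1 α, ((α+β-a-1).choose (α-a) : ℚ) / (x^a * (x+y)^(α+β-a)))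
      + ∑ b ∈ Finset.Icc 1 β, ((α+β-b-1).choose (β-b) : ℚ) / (y^b * (x+y)^(α+β-b)) := by
  intro n
  induction n with
  | zero => omega
  | succ n ih =>
    intro α β hab hn x y hx hy
    have hs : (0:ℚ) < x + y := by linarith
    have hx' : x ≠ 0 := ne_of_gt hx
    have hy' : y ≠ 0 := ne_of_gt hy
    have hs' : x + y ≠ 0 := ne_of_gt hs
    rcases Nat.eq_zero_or_pos α with hA | hA
    · subst hA
      simp only [Nat.zero_add, zero_add, pow_zero, one_mul] at *
      rw [show Finset.Icc 1 0 = ∅ by rfl, Finset.sum_empty, zero_add]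
      rw [Finset.sum_eq_single β]
      · rw [Nat.sub_self]
        norm_num
      · intro b hb hne
        simp only [Finset.mem_Icc] at hb
        rw [Nat.choose_eq_zero_of_lt (by omega)]
        simp
      · intro hβ
        simp [Finset.mem_Icc] at hβ
        omega
    rcases Nat.eq_zero_or_pos β with hB | hB
    · subst hB
      simp only [Nat.add_zero, add_zero, pow_zero, mul_one] at *
      rw [show Finset.Icc 1 0 = ∅ by rfl, Finset.sum_empty, add_zero]
      rw [Finset.sum_eq_single α]
      · rw [Nat.sub_self]
        norm_num
      · intro a ha hne
        simp only [Finset.mem_Icc] at ha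
        rw [Nat.choose_eq_zero_of_lt (by omega)]
        simp
      · intro hα
        simp [Finset.mem_Icc] at hα
        omega
    obtain ⟨α', rfl⟩ : ∃ α'', α = α'' + 1 := ⟨α - 1, by omega⟩
    obtain ⟨β', rfl⟩ : ∃ β'', β = β'' + 1 := ⟨β - 1, by omega⟩
    have key : 1 / (x^(α'+1) * y^(β'+1))
        = 1/(x+y) * (1/(x^α' * y^(β'+1)) + 1/(x^(α'+1) * y^β')) := by
      field_simp
      ring
    have hn1 : 0 < n := by omega
    rw [key, ih α' (β'+1) (by omega) hn1 x y hx hy,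
      ih (α'+1) β' (by omega) hn1 x y hx hy]
    simp only [show α' + (β'+1) = n from by omega, show α' + 1 + β' = n from by omega,
      show α' + 1 + (β'+1) = n + 1 from by omega,
      show ∀ a : ℕ, n + 1 - a - 1 = n - a from fun a => by omega]
    have hA := combine x (x+y) hx' hs' α' n (by omega)
    have hB2 := combine y (x+y) hy' hs' β' n (by omega)
    linear_combination hA + hB2


/-- For any set `S` of positive integers and bound `N`, the truncated
Mordell–Tornheim sum `T_N(α,β;γ)` decomposes into truncated double harmonic
sums `ℋ_N(a, w-a)` via partial fractions (Bradley–Zhou). -/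
theorem stmt_12 (S : Set ℕ) [DecidablePred (· ∈ S)] (N : ℕ)
    (α β γ : ℕ) (hα : 0 < α) (hβ : 0 < β) (hγ : 0 < γ) :
    (∑ k ∈ (Finset.range N ×ˢ Finset.range N).filter
        (fun k : ℕ × ℕ => 0 < k.1 ∧ 0 < k.2 ∧ k.1 + k.2 < N ∧
          k.1 ∈ S ∧ k.2 ∈ S ∧ k.1 + k.2 ∈ S),
        1 / ((k.1 : ℚ) ^ α * (k.2 : ℚ) ^ β * ((k.1 : ℚ) + (k.2 : ℚ)) ^ γ))
      = (∑ a ∈ Finset.Icc 1 α, ((α + β - a - 1).choose (α - a) : ℚ) *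
          ∑ u ∈ (Finset.range N ×ˢ Finset.range N).filter
            (fun u : ℕ × ℕ => 0 < u.1 ∧ u.1 < u.2 ∧
              u.1 ∈ S ∧ u.2 ∈ S ∧ u.2 - u.1 ∈ S),
            1 / ((u.1 : ℚ) ^ a * (u.2 : ℚ) ^ (α + β + γ - a))) +
        ∑ b ∈ Finset.Icc 1 β, ((α + β - b - 1).choose (β - b) : ℚ) *
          ∑ u ∈ (Finset.range N ×ˢ Finset.range N).filter
            (fun u : ℕ × ℕ => 0 < u.1 ∧ u.1 < u.2 ∧
              u.1 ∈ S ∧ u.2 ∈ S ∧ u.2 - u.1 ∈ S),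
            1 / ((u.1 : ℚ) ^ b * (u.2 : ℚ) ^ (α + β + γ - b)) := by
  classical
  have hterm : ∀ k ∈ (Finset.range N ×ˢ Finset.range N).filter
        (fun k : ℕ × ℕ => 0 < k.1 ∧ 0 < k.2 ∧ k.1 + k.2 < N ∧
          k.1 ∈ S ∧ k.2 ∈ S ∧ k.1 + k.2 ∈ S),
      1 / ((k.1 : ℚ) ^ α * (k.2 : ℚ) ^ β * ((k.1 : ℚ) + (k.2 : ℚ)) ^ γ)
        = (∑ a ∈ Finset.Icc 1 α, ((α+β-a-1).choose (α-a) : ℚ)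
            / ((k.1:ℚ)^a * ((k.1:ℚ)+(k.2:ℚ))^(α+β+γ-a)))
          + ∑ b ∈ Finset.Icc 1 β, ((α+β-b-1).choose (β-b) : ℚ)
            / ((k.2:ℚ)^b * ((k.1:ℚ)+(k.2:ℚ))^(α+β+γ-b)) := by
    intro k hk
    simp only [Finset.mem_filter] at hk
    obtain ⟨-, h1, h2, -⟩ := hk
    have hx : (0:ℚ) < k.1 := by exact_mod_cast h1
    have hy : (0:ℚ) < k.2 := by exact_mod_cast h2
    have hs : (0:ℚ) < (k.1:ℚ) + (k.2:ℚ) := by linarith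
    have hpf := pf (α+β) α β rfl (by omega) (k.1:ℚ) (k.2:ℚ) hx hy
    have e1 : 1 / ((k.1:ℚ)^α * (k.2:ℚ)^β * ((k.1:ℚ)+(k.2:ℚ))^γ)
        = (1 / ((k.1:ℚ)^α * (k.2:ℚ)^β)) * (1/(((k.1:ℚ)+(k.2:ℚ))^γ)) := by
      rw [div_mul_div_comm, one_mul]
    rw [e1, hpf, add_mul, Finset.sum_mul, Finset.sum_mul]
    congr 1 <;> apply Finset.sum_congr rfl <;> intro a ha <;>
      simp only [Finset.mem_Icc] at ha <;>
      rw [show α+β+γ-a = (α+β-a)+γ from by omega, pow_add,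
        div_mul_div_comm, mul_one, mul_assoc]
  rw [Finset.sum_congr rfl hterm, Finset.sum_add_distrib]
  congr 1
  · rw [Finset.sum_comm]
    apply Finset.sum_congr rfl
    intro a ha
    rw [Finset.mul_sum]
    apply Finset.sum_nbij' (fun k : ℕ × ℕ => (k.1, k.1 + k.2))
      (fun u : ℕ × ℕ => (u.1, u.2 - u.1))
    · rintro ⟨k1, k2⟩ hk
      simp only [Finset.mem_filter, Finset.mem_product, Finset.mem_range] at hk ⊢
      obtain ⟨⟨hk1, hk2⟩, p1, p2, p3, p4, p5, p6⟩ := hk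
      exact ⟨⟨by omega, by omega⟩, by omega, by omega, p4, p6, by
        rwa [Nat.add_sub_cancel_left]⟩
    · rintro ⟨u1, u2⟩ hu
      simp only [Finset.mem_filter, Finset.mem_product, Finset.mem_range] at hu ⊢
      obtain ⟨⟨hu1, hu2⟩, p1, p2, p3, p4, p5⟩ := hu
      exact ⟨⟨by omega, by omega⟩, by omega, by omega, by omega, p3, p5, by
        rwa [Nat.add_sub_cancel' (le_of_lt p2)]⟩
    · rintro ⟨k1, k2⟩ hk
      simp
    · rintro ⟨u1, u2⟩ hu
      simp only [Finset.mem_filter, Finset.mem_product, Finset.mem_range] at hu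
      obtain ⟨⟨hu1, hu2⟩, p1, p2, p3, p4, p5⟩ := hu
      show (_, _) = (_, _)
      exact Prod.ext rfl (by omega)
    · rintro ⟨k1, k2⟩ hk
      push_cast
      ring
  · rw [Finset.sum_comm]
    apply Finset.sum_congr rfl
    intro b hb
    rw [Finset.mul_sum]
    apply Finset.sum_nbij' (fun k : ℕ × ℕ => (k.2, k.1 + k.2))
      (fun u : ℕ × ℕ => (u.2 - u.1, u.1))
    · rintro ⟨k1, k2⟩ hk
      simp only [Finset.mem_filter, Finset.mem_product, Finset.mem_range] at hk ⊢
      obtain ⟨⟨hk1, hk2⟩, p1, p2, p3, p4, p5, p6⟩ := hk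
      exact ⟨⟨by omega, by omega⟩, by omega, by omega, p5, p6, by
        rwa [Nat.add_sub_cancel]⟩
    · rintro ⟨u1, u2⟩ hu
      simp only [Finset.mem_filter, Finset.mem_product, Finset.mem_range] at hu ⊢
      obtain ⟨⟨hu1, hu2⟩, p1, p2, p3, p4, p5⟩ := hu
      exact ⟨⟨by omega, by omega⟩, by omega, by omega, by omega, p5, p3, by
        rwa [Nat.sub_add_cancel (le_of_lt p2)]⟩
    · rintro ⟨k1, k2⟩ hk
      show (_, _) = (_, _)
      exact Prod.ext (by omega) rfl
    · rintro ⟨u1, u2⟩ hu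
      simp only [Finset.mem_filter, Finset.mem_product, Finset.mem_range] at hu
      obtain ⟨⟨hu1, hu2⟩, p1, p2, p3, p4, p5⟩ := hu
      show (_, _) = (_, _)
      exact Prod.ext rfl (by omega)
    · rintro ⟨k1, k2⟩ hk
      push_cast
      ring
end

section
/- For positive integers α, β and γ (all ≥ 1), the partial fraction identity 1/(x^α y^β) = ∑_{a=1}^{α} C(α+β-a-1, α-a) / (x^a (x+y)^{α+β-a}) + ∑_{b=1}^{β} C(α+β-b-1, β-b) / (y^b (x+y)^{α+β-b}) holds for all nonzero real numbers x, y with x + y ≠ 0. -/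
open Finset

private lemma pascal_sum (z w : ℝ) (A B : ℕ) :
    (∑ a ∈ Icc 1 A, ((A+B-a).choose (A-a) : ℝ)/(z^a * w^(A+B+2-a)))
      + ∑ a ∈ Icc 1 (A+1), ((A+B-a).choose (A+1-a) : ℝ)/(z^a * w^(A+B+2-a))
    = ∑ a ∈ Icc 1 (A+1), ((A+B+1-a).choose (A+1-a) : ℝ)/(z^a * w^(A+B+2-a)) := by
  rw [Finset.sum_Icc_succ_top (by omega), Finset.sum_Icc_succ_top (by omega), ← add_assoc,
    ← Finset.sum_add_distrib]
  congr 1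
  · refine Finset.sum_congr rfl fun a ha => ?_
    simp only [Finset.mem_Icc] at ha
    rw [← add_div]
    congr 1
    rw [← Nat.cast_add]
    congr 1
    have e1 : A+1-a = (A-a)+1 := by omega
    have e2 : A+B+1-a = (A+B-a)+1 := by omega
    rw [e1, e2, Nat.choose_succ_succ]
  · simp

private lemma side (z w : ℝ) (A B : ℕ) :
    1/w * ((∑ a ∈ Icc 1 A, ((A+B-a).choose (A-a) : ℝ)/(z^a * w^(A+B+1-a)))
      + ∑ a ∈ Icc 1 (A+1), ((A+B-a).choose (A+1-a) : ℝ)/(z^a * w^(A+B+1-a)))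
    = ∑ a ∈ Icc 1 (A+1), ((A+B+1-a).choose (A+1-a) : ℝ)/(z^a * w^(A+B+2-a)) := by
  rw [mul_add, Finset.mul_sum, Finset.mul_sum, ← pascal_sum]
  congr 1 <;>
  · refine Finset.sum_congr rfl fun a ha => ?_
    simp only [Finset.mem_Icc] at ha
    rw [one_div_mul_eq_div, div_div, mul_assoc, ← pow_succ]
    have e : (A+B+1-a)+1 = A+B+2-a := by omega
    rw [e]

private lemma side' (z w : ℝ) (A B : ℕ) :
    1/w * ((∑ a ∈ Icc 1 (A+1), ((A+B-a).choose (A+1-a) : ℝ)/(z^a * w^(A+B+1-a)))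
      + ∑ a ∈ Icc 1 A, ((A+B-a).choose (A-a) : ℝ)/(z^a * w^(A+B+1-a)))
    = ∑ a ∈ Icc 1 (A+1), ((A+B+1-a).choose (A+1-a) : ℝ)/(z^a * w^(A+B+2-a)) := by
  rw [add_comm]; exact side z w A B

private lemma main_lemma (x y : ℝ) (hx : x ≠ 0) (hy : y ≠ 0) (hxy : x + y ≠ 0) :
    ∀ n, 0 < n → ∀ α β : ℕ, α + β = n →
      1 / (x ^ α * y ^ β)
        = (∑ a ∈ Icc 1 α, ((α + β - a - 1).choose (α - a) : ℝ) / (x ^ a * (x + y) ^ (α + β - a)))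
          + ∑ b ∈ Icc 1 β, ((α + β - b - 1).choose (β - b) : ℝ) / (y ^ b * (x + y) ^ (α + β - b)) := by
  intro n
  induction n using Nat.strong_induction_on with
  | _ n IH =>
    intro hn α β hab
    match α, β with
    | 0, β =>
      have hβ : 0 < β := by omega
      rw [Finset.sum_eq_single_of_mem β (Finset.mem_Icc.mpr ⟨hβ, le_refl β⟩)
        (fun b hb hne => by
          simp only [Finset.mem_Icc] at hb
          rw [Nat.choose_eq_zero_of_lt (by omega)]
          simp)]
      rw [Finset.Icc_eq_empty (by omega), Finset.sum_empty]
      simp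
    | (A+1), 0 =>
      rw [Finset.sum_eq_single_of_mem (A+1) (Finset.mem_Icc.mpr ⟨by omega, le_refl _⟩)
        (fun a ha hne => by
          simp only [Finset.mem_Icc] at ha
          rw [Nat.choose_eq_zero_of_lt (by omega)]
          simp)]
      rw [Finset.Icc_eq_empty (by omega), Finset.sum_empty]
      simp
    | (A+1), (B+1) =>
      have h1 := IH (A + (B+1)) (by omega) (by omega) A (B+1) rfl
      have h2 := IH ((A+1) + B) (by omega) (by omega) (A+1) B rfl
      have hrec : 1/(x^(A+1)*y^(B+1)) = 1/(x+y) * (1/(x^A*y^(B+1)) + 1/(x^(A+1)*y^B)) := by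
        field_simp
        ring
      rw [hrec, h1, h2]
      have rearr : ∀ w a b c d : ℝ, w * ((a + b) + (c + d)) = w * (a + c) + w * (b + d) := by
        intros; ring
      rw [rearr]
      have ex1 : (∑ a ∈ Icc 1 A, ((A + (B+1) - a - 1).choose (A-a):ℝ)/(x^a*(x+y)^(A+(B+1)-a)))
          = ∑ a ∈ Icc 1 A, ((A+B-a).choose (A-a):ℝ)/(x^a*(x+y)^(A+B+1-a)) := by
        refine Finset.sum_congr rfl fun a ha => ?_
        simp only [Finset.mem_Icc] at ha
        have e1 : A + (B+1) - a - 1 = A+B-a := by omega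
        have e2 : A + (B+1) - a = A+B+1-a := by omega
        rw [e1, e2]
      have ex2 : (∑ a ∈ Icc 1 (A+1), ((A+1+B - a - 1).choose (A+1-a):ℝ)/(x^a*(x+y)^(A+1+B-a)))
          = ∑ a ∈ Icc 1 (A+1), ((A+B-a).choose (A+1-a):ℝ)/(x^a*(x+y)^(A+B+1-a)) := by
        refine Finset.sum_congr rfl fun a ha => ?_
        simp only [Finset.mem_Icc] at ha
        have e1 : A+1+B - a - 1 = A+B-a := by omega
        have e2 : A+1+B - a = A+B+1-a := by omega
        rw [e1, e2]
      have ex3 : (∑ a ∈ Icc 1 (A+1), ((A+1+(B+1) - a - 1).choose (A+1-a):ℝ)/(x^a*(x+y)^(A+1+(B+1)-a)))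
          = ∑ a ∈ Icc 1 (A+1), ((A+B+1-a).choose (A+1-a):ℝ)/(x^a*(x+y)^(A+B+2-a)) := by
        refine Finset.sum_congr rfl fun a ha => ?_
        simp only [Finset.mem_Icc] at ha
        have e1 : A+1+(B+1) - a - 1 = A+B+1-a := by omega
        have e2 : A+1+(B+1) - a = A+B+2-a := by omega
        rw [e1, e2]
      have ey1 : (∑ b ∈ Icc 1 (B+1), ((A + (B+1) - b - 1).choose (B+1-b):ℝ)/(y^b*(x+y)^(A+(B+1)-b)))
          = ∑ b ∈ Icc 1 (B+1), ((B+A-b).choose (B+1-b):ℝ)/(y^b*(x+y)^(B+A+1-b)) := by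
        refine Finset.sum_congr rfl fun b hb => ?_
        simp only [Finset.mem_Icc] at hb
        have e1 : A + (B+1) - b - 1 = B+A-b := by omega
        have e2 : A + (B+1) - b = B+A+1-b := by omega
        rw [e1, e2]
      have ey2 : (∑ b ∈ Icc 1 B, ((A+1+B - b - 1).choose (B-b):ℝ)/(y^b*(x+y)^(A+1+B-b)))
          = ∑ b ∈ Icc 1 B, ((B+A-b).choose (B-b):ℝ)/(y^b*(x+y)^(B+A+1-b)) := by
        refine Finset.sum_congr rfl fun b hb => ?_
        simp only [Finset.mem_Icc] at hb
        have e1 : A+1+B - b - 1 = B+A-b := by omega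
        have e2 : A+1+B - b = B+A+1-b := by omega
        rw [e1, e2]
      have ey3 : (∑ b ∈ Icc 1 (B+1), ((A+1+(B+1) - b - 1).choose (B+1-b):ℝ)/(y^b*(x+y)^(A+1+(B+1)-b)))
          = ∑ b ∈ Icc 1 (B+1), ((B+A+1-b).choose (B+1-b):ℝ)/(y^b*(x+y)^(B+A+2-b)) := by
        refine Finset.sum_congr rfl fun b hb => ?_
        simp only [Finset.mem_Icc] at hb
        have e1 : A+1+(B+1) - b - 1 = B+A+1-b := by omega
        have e2 : A+1+(B+1) - b = B+A+2-b := by omega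
        rw [e1, e2]
      rw [ex1, ex2, ex3, ey1, ey2, ey3]
      congr 1
      · exact side x (x+y) A B
      · exact side' y (x+y) B A

/-- The Bradley–Zhou partial-fraction identity: for positive integers `α, β, γ`
and nonzero reals `x, y` with `x + y ≠ 0`,
`1/(x^α y^β) = ∑_{a=1}^{α} C(α+β-a-1, α-a)/(x^a (x+y)^{α+β-a})
  + ∑_{b=1}^{β} C(α+β-b-1, β-b)/(y^b (x+y)^{α+β-b})`. -/
theorem stmt_13 (α β γ : ℕ) (hα : 0 < α) (hβ : 0 < β) (hγ : 0 < γ)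
    (x y : ℝ) (hx : x ≠ 0) (hy : y ≠ 0) (hxy : x + y ≠ 0) :
    1 / (x ^ α * y ^ β)
      = (∑ a ∈ Finset.Icc 1 α,
            ((α + β - a - 1).choose (α - a) : ℝ) / (x ^ a * (x + y) ^ (α + β - a))) +
        ∑ b ∈ Finset.Icc 1 β,
            ((α + β - b - 1).choose (β - b) : ℝ) / (y ^ b * (x + y) ^ (α + β - b)) := by
  exact main_lemma x y hx hy hxy (α + β) (by omega) α β rfl
end

section
/- For positive integers α and β, and nonzero reals x, y with x+y ≠ 0: 1/(x^α y^β) = ∑_{s=0}^{α-1} C(s+β-1, s) / (x^{α-s} (x+y)^{β+s}) + ∑_{t=0}^{β-1} C(t+α-1, t) / (y^{β-t} (x+y)^{α+t}). -/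
lemma claimA (p q : ℕ) (u z : ℝ) (hu : u ≠ 0) (hz : z ≠ 0) :
    ((∑ s ∈ Finset.range p, ((s + q).choose s : ℝ) / (u ^ (p - s) * z ^ (q + 1 + s))) +
     ∑ s ∈ Finset.range (p + 1), ((s + q - 1).choose s : ℝ) / (u ^ (p + 1 - s) * z ^ (q + s))) / z
    = ∑ s ∈ Finset.range (p + 1), ((s + q).choose s : ℝ) / (u ^ (p + 1 - s) * z ^ (q + 1 + s)) := by
  rw [add_div, Finset.sum_div, Finset.sum_div,
      Finset.sum_range_succ' (fun s => ((s + q - 1).choose s : ℝ) / (u ^ (p + 1 - s) * z ^ (q + s)) / z) p,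
      Finset.sum_range_succ' (fun s => ((s + q).choose s : ℝ) / (u ^ (p + 1 - s) * z ^ (q + 1 + s))) p]
  rw [← add_assoc, ← Finset.sum_add_distrib]
  congr 1
  · refine Finset.sum_congr rfl fun s hs => ?_
    have e1 : p + 1 - (s + 1) = p - s := by omega
    have e2 : s + 1 + q - 1 = s + q := by omega
    have e3 : q + (s + 1) = q + s + 1 := by omega
    have e4 : q + 1 + (s + 1) = q + 1 + s + 1 := by omega
    have e5 : q + 1 + s = q + s + 1 := by omega
    rw [e1, e2, e3, e4, e5]
    have hc : ((s + 1 + q).choose (s + 1) : ℝ) = (s + q).choose s + (s + q).choose (s + 1) := by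
      rw [show s + 1 + q = (s + q) + 1 by omega, Nat.choose_succ_succ]
      push_cast; ring
    rw [hc]
    have hup : u ^ (p - s) ≠ 0 := pow_ne_zero _ hu
    have hzp : z ^ (q + s + 1) ≠ 0 := pow_ne_zero _ hz
    field_simp
    ring
  · simp only [Nat.zero_add, Nat.choose_zero_right, Nat.cast_one, Nat.add_zero, Nat.sub_zero]
    rw [pow_succ]
    field_simp
    ring

lemma key : ∀ n a b : ℕ, a + b = n → 0 < a + b → ∀ x y : ℝ, x ≠ 0 → y ≠ 0 → x + y ≠ 0 →
    1 / (x ^ a * y ^ b)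
      = (∑ s ∈ Finset.range a, ((s + b - 1).choose s : ℝ) / (x ^ (a - s) * (x + y) ^ (b + s))) +
        ∑ t ∈ Finset.range b, ((t + a - 1).choose t : ℝ) / (y ^ (b - t) * (x + y) ^ (a + t)) := by
  intro n
  induction n using Nat.strong_induction_on with
  | _ n ih =>
  intro a b hab hpos x y hx hy hxy
  match a, b with
  | 0, 0 => simp at hpos
  | a+1, 0 =>
    rw [Finset.sum_range_succ']
    simp [Nat.choose_succ_self]
  | 0, b+1 =>
    rw [Finset.sum_range_succ' (fun t => ((t + 0 - 1).choose t : ℝ) / (y ^ (b + 1 - t) * (x + y) ^ (0 + t))) b]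
    simp [Nat.choose_succ_self]
  | a+1, b+1 =>
    have h1 := ih (a + (b + 1)) (by omega) a (b + 1) rfl (by omega) x y hx hy hxy
    have h2 := ih ((a + 1) + b) (by omega) (a + 1) b rfl (by omega) x y hx hy hxy
    have hsplit : 1 / (x ^ (a + 1) * y ^ (b + 1))
        = (1 / (x ^ a * y ^ (b + 1)) + 1 / (x ^ (a + 1) * y ^ b)) / (x + y) := by
      field_simp
      ring
    rw [hsplit, h1, h2]
    simp only [Nat.add_succ_sub_one]
    rw [← claimA a b x (x + y) hx hxy, ← claimA b a y (x + y) hy hxy]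
    ring

/-- Bradley–Zhou partial fraction lemma: for positive integers `α, β` and
nonzero reals `x, y` with `x + y ≠ 0`,
`1/(x^α y^β) = ∑_{s=0}^{α-1} C(s+β-1,s)/(x^{α-s}(x+y)^{β+s})
  + ∑_{t=0}^{β-1} C(t+α-1,t)/(y^{β-t}(x+y)^{α+t})`. -/
theorem stmt_19 (α β : ℕ) (hα : 0 < α) (hβ : 0 < β)
    (x y : ℝ) (hx : x ≠ 0) (hy : y ≠ 0) (hxy : x + y ≠ 0) :
    1 / (x ^ α * y ^ β)
      = (∑ s ∈ Finset.range α,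
            ((s + β - 1).choose s : ℝ) / (x ^ (α - s) * (x + y) ^ (β + s))) +
        ∑ t ∈ Finset.range β,
            ((t + α - 1).choose t : ℝ) / (y ^ (β - t) * (x + y) ^ (α + t)) := by
  exact key (α + β) α β rfl (by omega) x y hx hy hxy
end
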